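/- arXiv:2001.05011 — 7 statements merged into one kernel-verified Lean document; each statement's English description precedes it below -/
import Mathlib

section
/- For a permutation w in the symmetric group S_n, the following are equivalent: (1) w avoids the patterns 321 and 3412; (2) some reduced word for w (as a product of adjacent transpositions σ_1,...,σ_{n-1}) has all distinct letters; (3) every reduced word for w has all distinct letters. -/
/-- The adjacent transposition `σ_{i+1} = (i+1, i+2)` (1-indexed), acting on `Fin n`;
here `i : Fin (n-1)` is the 0-indexed label, swapping positions `i` and `i+1`. -/
def sgen (n : ℕ) (i : Fin (n - 1)) : Equiv.Perm (Fin n) :=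
  Equiv.swap ⟨i.1, by have := i.2; omega⟩ ⟨i.1 + 1, by have := i.2; omega⟩

/-- `l` is a reduced word for `w`: its product is `w` and no shorter word of
adjacent transpositions has product `w`. -/
def IsReducedWord (n : ℕ) (w : Equiv.Perm (Fin n)) (l : List (Fin (n - 1))) : Prop :=
  (l.map (sgen n)).prod = w ∧
    ∀ l' : List (Fin (n - 1)), (l'.map (sgen n)).prod = w → l.length ≤ l'.length

/-- Bruhat order on `S_n` via the subword property: `v ≤ w` iff some reduced word
of `v` is a (not necessarily consecutive) subword of some reduced word of `w`. -/
def BruhatLe (n : ℕ) (v w : Equiv.Perm (Fin n)) : Prop :=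
  ∃ lw lv : List (Fin (n - 1)),
    IsReducedWord n w lw ∧ IsReducedWord n v lv ∧ lv.Sublist lw

/-- `w` contains the pattern `321`. -/
def Contains321 {n : ℕ} (w : Equiv.Perm (Fin n)) : Prop :=
  ∃ i j k : Fin n, i < j ∧ j < k ∧ w k < w j ∧ w j < w i

/-- `w` contains the pattern `3412`. -/
def Contains3412 {n : ℕ} (w : Equiv.Perm (Fin n)) : Prop :=
  ∃ i j k l : Fin n, i < j ∧ j < k ∧ k < l ∧ w k < w l ∧ w l < w i ∧ w i < w j

/-- `w` contains the pattern `231`. -/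
def Contains231 {n : ℕ} (w : Equiv.Perm (Fin n)) : Prop :=
  ∃ i j k : Fin n, i < j ∧ j < k ∧ w k < w i ∧ w i < w j

/-- `w` contains the pattern `312`. -/
def Contains312 {n : ℕ} (w : Equiv.Perm (Fin n)) : Prop :=
  ∃ i j k : Fin n, i < j ∧ j < k ∧ w j < w k ∧ w k < w i

/-!
The length of `w` is its number of inversions. Call `c` the cut between positions `c` and
`c + 1`. An occurrence of the letter `c` in a word moves at most one value across this cut, and
the letters not equal to `c` preserve it; so every word for `w` contains each letter of
`letterSupport w` (the cuts `w` does not preserve), and a word is repetition-free as soon as its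
length is at most `#(letterSupport w)`. The letters of a repetition-free word are exactly
`letterSupport w`, so if one reduced word is repetition-free, all are.

If `w` avoids `321` and `3412`, no cut is crossed upwards by two positions, and every inversion
`(a, b)` crosses the cut `max a (w b)` (`a` upwards, `b` downwards); this injects the inversions
into `letterSupport w`. Conversely, a repetition-free word crosses each cut at most once, which
rules out `3412`, and `321` unless its middle entry is a fixed point `j`; but then both letters
`j - 1` and `j` occur once, and these single occurrences cannot bring `j` back.
-/

open Equiv Finset

lemma List.Nodup.exists_eq_append_cons {α : Type*} {l : List α} {c : α} (hl : l.Nodup)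
    (hc : c ∈ l) : ∃ s t, l = s ++ c :: t ∧ c ∉ s ∧ c ∉ t ∧ ∀ x ∈ s, x ∉ t := by
  obtain ⟨s, t, rfl⟩ := List.append_of_mem hc
  simp only [List.nodup_append, List.nodup_cons, List.mem_cons] at hl
  exact ⟨s, t, rfl, fun h => hl.2.2 c h c (.inl rfl) rfl, hl.2.1.1,
    fun x hx hxt => hl.2.2 x hx x (.inr hxt) rfl⟩

lemma Finset.exists_mem_lt_of_one_lt_card {α : Type*} [LinearOrder α] {s : Finset α}
    (h : 1 < #s) : ∃ a ∈ s, ∃ b ∈ s, a < b :=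
  ⟨_, min'_mem s _, _, max'_mem s _, min'_lt_max'_of_card s h⟩

lemma Equiv.Perm.eq_one_of_forall_apply_lt_apply_succ {n : ℕ} {v : Perm (Fin n)}
    (h : ∀ a b : Fin n, (b : ℕ) = a + 1 → v a < v b) : v = 1 := by
  cases n with
  | zero => exact Subsingleton.elim _ _
  | succ m =>
    have hv : StrictMono v := Fin.strictMono_iff_lt_succ.mpr fun a => h _ _ rfl
    exact Equiv.ext fun a =>
      Fin.ext (Fin.coe_orderIso_apply (hv.orderIsoOfSurjective v v.surjective) a)

section

variable {n : ℕ}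

lemma val_sgen_apply (i : Fin (n - 1)) (a : Fin n) :
    (sgen n i a : ℕ) =
      if (a : ℕ) = i then (i : ℕ) + 1 else if (a : ℕ) = (i : ℕ) + 1 then (i : ℕ) else a := by
  rw [sgen, swap_apply_def]
  split_ifs <;> simp_all [Fin.ext_iff]

lemma sgen_mul_self (i : Fin (n - 1)) : sgen n i * sgen n i = 1 :=
  swap_mul_self _ _

lemma eq_of_sgen_apply_lt_sgen_apply {i : Fin (n - 1)} {x y : Fin n} (hxy : x < y)
    (h : sgen n i y < sgen n i x) : (x : ℕ) = i ∧ (y : ℕ) = i + 1 := by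
  rw [Fin.lt_def, val_sgen_apply, val_sgen_apply] at h
  split_ifs at h <;> omega

def PreservesCut (k : ℕ) (w : Perm (Fin n)) : Prop :=
  ∀ a : Fin n, (w a : ℕ) ≤ k ↔ (a : ℕ) ≤ k

instance (k : ℕ) (w : Perm (Fin n)) : Decidable (PreservesCut k w) := by
  unfold PreservesCut; infer_instance

namespace PreservesCut

variable {k : ℕ} {u v : Perm (Fin n)}

lemma one : PreservesCut k (1 : Perm (Fin n)) := fun _ => Iff.rfl

lemma mul (hu : PreservesCut k u) (hv : PreservesCut k v) : PreservesCut k (u * v) :=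
  fun a => (hu (v a)).trans (hv a)

lemma inv (hu : PreservesCut k u) : PreservesCut k u⁻¹ := fun a => by
  simpa using (hu (u⁻¹ a)).symm

end PreservesCut

lemma preservesCut_sgen {i : Fin (n - 1)} {k : ℕ} (hik : (i : ℕ) ≠ k) :
    PreservesCut k (sgen n i) := fun a => by
  rw [val_sgen_apply]
  split_ifs <;> omega

lemma preservesCut_prod {c : Fin (n - 1)} {l : List (Fin (n - 1))} (hc : c ∉ l) :
    PreservesCut c (l.map (sgen n)).prod := by
  induction l with
  | nil => exact PreservesCut.one
  | cons a l ih =>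
    rw [List.mem_cons, not_or] at hc
    exact (preservesCut_sgen (Fin.val_ne_of_ne (Ne.symm hc.1))).mul (ih hc.2)

def crossUp (k : ℕ) (w : Perm (Fin n)) : Finset (Fin n) :=
  {a | (a : ℕ) ≤ k ∧ k < w a}

@[simp]
lemma mem_crossUp {k : ℕ} {w : Perm (Fin n)} {a : Fin n} :
    a ∈ crossUp k w ↔ (a : ℕ) ≤ k ∧ k < w a := by
  simp [crossUp]

lemma not_preservesCut_of_mem_crossUp {k : ℕ} {w : Perm (Fin n)} {a : Fin n}
    (ha : a ∈ crossUp k w) : ¬ PreservesCut k w := fun hw => by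
  have := hw a
  rw [mem_crossUp] at ha
  omega

def crossDown (k : ℕ) (w : Perm (Fin n)) : Finset (Fin n) :=
  {b | k < (b : ℕ) ∧ (w b : ℕ) ≤ k}

@[simp]
lemma mem_crossDown {k : ℕ} {w : Perm (Fin n)} {b : Fin n} :
    b ∈ crossDown k w ↔ k < (b : ℕ) ∧ (w b : ℕ) ≤ k := by
  simp [crossDown]

lemma card_crossUp_eq_card_crossDown (k : ℕ) (w : Perm (Fin n)) :
    #(crossUp k w) = #(crossDown k w) := by
  have hw : #{a : Fin n | (w a : ℕ) ≤ k} = #{a : Fin n | (a : ℕ) ≤ k} :=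
    card_nbij' (⇑w) (⇑w⁻¹) (fun a ha => by simpa using ha) (fun a ha => by simpa using ha)
      (fun a _ => by simp) (fun a _ => by simp)
  have h₁ : #{a : Fin n | (a : ℕ) ≤ k ∧ (w a : ℕ) ≤ k} + #(crossUp k w) =
      #{a : Fin n | (a : ℕ) ≤ k} := by
    rw [← card_filter_add_card_filter_not (s := {a : Fin n | (a : ℕ) ≤ k})
      fun a => (w a : ℕ) ≤ k]
    simp only [crossUp, filter_filter, not_le]
  have h₂ : #{a : Fin n | (a : ℕ) ≤ k ∧ (w a : ℕ) ≤ k} + #(crossDown k w) =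
      #{a : Fin n | (w a : ℕ) ≤ k} := by
    rw [← card_filter_add_card_filter_not (s := {a : Fin n | (w a : ℕ) ≤ k})
      fun a => (a : ℕ) ≤ k]
    simp only [crossDown, filter_filter, not_le, and_comm]
  omega

lemma crossUp_sgen_mul_of_ne {i : Fin (n - 1)} {k : ℕ} (hik : (i : ℕ) ≠ k)
    (w : Perm (Fin n)) :
    crossUp k (sgen n i * w) = crossUp k w := by
  ext a
  simp only [mem_crossUp, Perm.mul_apply, ← not_le, preservesCut_sgen hik _]

/-- Left multiplication by `sgen n c` moves only the value `c` across the cut `c`. -/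
lemma card_crossUp_sgen_mul_le (c : Fin (n - 1)) (w : Perm (Fin n)) :
    #(crossUp c (sgen n c * w)) ≤ #(crossUp c w) + 1 := by
  have hnew : #(crossUp c (sgen n c * w) \ crossUp c w) ≤ 1 := by
    refine card_le_one.mpr fun a ha b hb => w.injective (Fin.ext ?_)
    simp only [mem_sdiff, mem_crossUp, Perm.mul_apply, val_sgen_apply] at ha hb
    split_ifs at ha hb <;> omega
  exact (card_le_card_sdiff_add_card (t := crossUp c w)).trans (by omega)

lemma card_crossUp_prod_le_count (c : Fin (n - 1)) (l : List (Fin (n - 1))) :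
    #(crossUp c (l.map (sgen n)).prod) ≤ l.count c := by
  induction l with
  | nil => simp [crossUp]
  | cons a l ih =>
    rw [List.map_cons, List.prod_cons, List.count_cons]
    by_cases hac : a = c
    · subst hac
      simpa using (card_crossUp_sgen_mul_le a _).trans (by omega)
    · rw [crossUp_sgen_mul_of_ne (Fin.val_ne_of_ne hac)]
      simpa [hac] using ih

lemma card_crossUp_le_one_of_nodup {l : List (Fin (n - 1))} (hl : l.Nodup) (k : ℕ) :
    #(crossUp k (l.map (sgen n)).prod) ≤ 1 := by
  by_cases hk : k < n - 1
  · exact (card_crossUp_prod_le_count ⟨k, hk⟩ l).trans (List.nodup_iff_count_le_one.mp hl _)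
  · refine card_le_one.mpr fun a ha => ?_
    simp only [mem_crossUp] at ha
    omega

lemma card_crossDown_le_one_of_nodup {l : List (Fin (n - 1))} (hl : l.Nodup) (k : ℕ) :
    #(crossDown k (l.map (sgen n)).prod) ≤ 1 :=
  card_crossUp_eq_card_crossDown k _ ▸ card_crossUp_le_one_of_nodup hl k

def letterSupport (w : Perm (Fin n)) : Finset (Fin (n - 1)) :=
  {c | ¬ PreservesCut c w}

@[simp]
lemma mem_letterSupport {w : Perm (Fin n)} {c : Fin (n - 1)} :
    c ∈ letterSupport w ↔ ¬ PreservesCut c w := by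
  simp [letterSupport]

lemma letterSupport_subset_toFinset {l : List (Fin (n - 1))} :
    letterSupport (l.map (sgen n)).prod ⊆ l.toFinset := fun c hc => by
  by_contra hcl
  rw [mem_letterSupport] at hc
  exact hc (preservesCut_prod (by simpa using hcl))

lemma not_preservesCut_of_mem {l : List (Fin (n - 1))} (hl : l.Nodup) {c : Fin (n - 1)}
    (hc : c ∈ l) : ¬ PreservesCut c (l.map (sgen n)).prod := by
  obtain ⟨s, t, rfl, hcs, hct, -⟩ := hl.exists_eq_append_cons hc
  set u := (s.map (sgen n)).prod
  set v := (t.map (sgen n)).prod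
  intro hw
  have hsc : sgen n c = u⁻¹ * (u * (sgen n c * v)) * v⁻¹ := by group
  have hc' := (((preservesCut_prod hcs).inv.mul (by simpa using hw)).mul
    (preservesCut_prod hct).inv) (Fin.castLE (Nat.sub_le n 1) c)
  rw [← hsc, val_sgen_apply] at hc'
  simp at hc'

lemma toFinset_subset_letterSupport {l : List (Fin (n - 1))} (hl : l.Nodup) :
    l.toFinset ⊆ letterSupport (l.map (sgen n)).prod := fun _ hc =>
  mem_letterSupport.mpr (not_preservesCut_of_mem hl (List.mem_toFinset.mp hc))

lemma nodup_of_length_le_card_letterSupport {l : List (Fin (n - 1))}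
    (h : l.length ≤ #(letterSupport (l.map (sgen n)).prod)) : l.Nodup := by
  rw [← List.dedup_eq_self]
  refine (List.dedup_sublist l).eq_of_length ?_
  rw [← List.card_toFinset]
  exact le_antisymm (List.toFinset_card_le l) (h.trans (card_le_card letterSupport_subset_toFinset))

def inversions (w : Perm (Fin n)) : Finset (Fin n × Fin n) :=
  {p | p.1 < p.2 ∧ w p.2 < w p.1}

@[simp]
lemma mem_inversions {w : Perm (Fin n)} {p : Fin n × Fin n} :
    p ∈ inversions w ↔ p.1 < p.2 ∧ w p.2 < w p.1 := by
  simp [inversions]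

lemma card_inversions_sgen_mul_le (i : Fin (n - 1)) (w : Perm (Fin n)) :
    #(inversions (sgen n i * w)) ≤ #(inversions w) + 1 := by
  have hnew : #(inversions (sgen n i * w) \ inversions w) ≤ 1 := by
    refine card_le_one.mpr fun p hp q hq => ?_
    simp only [mem_sdiff, mem_inversions, Perm.mul_apply, not_and, not_lt] at hp hq
    have hp' := eq_of_sgen_apply_lt_sgen_apply
      ((hp.2 hp.1.1).lt_of_ne (w.injective.ne hp.1.1.ne)) hp.1.2
    have hq' := eq_of_sgen_apply_lt_sgen_apply
      ((hq.2 hq.1.1).lt_of_ne (w.injective.ne hq.1.1.ne)) hq.1.2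
    exact Prod.ext (w.injective (Fin.ext (by omega))) (w.injective (Fin.ext (by omega)))
  exact (card_le_card_sdiff_add_card (t := inversions w)).trans (by omega)

/-- Only the values `i` and `i + 1` change their relative order. -/
lemma card_inversions_sgen_mul_lt {i : Fin (n - 1)} {w : Perm (Fin n)} {x y : Fin n}
    (hx : (w x : ℕ) = i) (hy : (w y : ℕ) = i + 1) (hyx : y < x) :
    #(inversions (sgen n i * w)) < #(inversions w) := by
  have hsub : inversions (sgen n i * w) ⊆ inversions w := by
    intro p hp
    simp only [mem_inversions, Perm.mul_apply] at hp ⊢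
    refine ⟨hp.1, lt_of_not_ge fun hle => ?_⟩
    have := eq_of_sgen_apply_lt_sgen_apply (hle.lt_of_ne (w.injective.ne hp.1.ne)) hp.2
    have hp1 : p.1 = x := w.injective (Fin.ext (by omega))
    have hp2 : p.2 = y := w.injective (Fin.ext (by omega))
    exact hyx.asymm (hp1 ▸ hp2 ▸ hp.1)
  refine card_lt_card ((ssubset_iff_of_subset hsub).mpr ⟨(y, x), ?_, ?_⟩)
  · simp only [mem_inversions, Fin.lt_def]
    omega
  · rw [mem_inversions, Perm.mul_apply, Perm.mul_apply, Fin.lt_def, Fin.lt_def, val_sgen_apply,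
      val_sgen_apply, hx, hy]
    simp

lemma card_inversions_prod_le_length (l : List (Fin (n - 1))) :
    #(inversions (l.map (sgen n)).prod) ≤ l.length := by
  induction l with
  | nil => simpa [inversions] using fun a b (h : a < b) => h.le
  | cons a l ih =>
    rw [List.map_cons, List.prod_cons, List.length_cons]
    exact (card_inversions_sgen_mul_le a _).trans (by omega)

lemma exists_prod_eq_of_length_le_card_inversions (w : Perm (Fin n)) :
    ∃ l : List (Fin (n - 1)), (l.map (sgen n)).prod = w ∧ l.length ≤ #(inversions w) := by
  induction hw : #(inversions w) using Nat.strong_induction_on generalizing w with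
  | _ m ih =>
    by_cases hdesc : ∀ a b : Fin n, (b : ℕ) = a + 1 → w⁻¹ a < w⁻¹ b
    · exact ⟨[], by
      simp [inv_eq_one.mp (Perm.eq_one_of_forall_apply_lt_apply_succ hdesc)], by simp⟩
    simp only [not_forall, not_lt] at hdesc
    obtain ⟨a, b, hab, hle⟩ := hdesc
    have hlt : w⁻¹ b < w⁻¹ a := hle.lt_of_ne (w⁻¹.injective.ne (by omega))
    set i : Fin (n - 1) := ⟨a, by omega⟩
    have hdec := card_inversions_sgen_mul_lt (i := i) (w := w) (x := w⁻¹ a) (y := w⁻¹ b)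
      (by simp [i]) (by simp [i, hab]) hlt
    obtain ⟨l, hl, hlen⟩ := ih _ (hw ▸ hdec) _ rfl
    refine ⟨i :: l, ?_, by simp; omega⟩
    rw [List.map_cons, List.prod_cons, hl, ← mul_assoc, sgen_mul_self, one_mul]

lemma exists_isReducedWord (w : Perm (Fin n)) : ∃ l, IsReducedWord n w l := by
  obtain ⟨l, hl, hlen⟩ := exists_prod_eq_of_length_le_card_inversions w
  exact ⟨l, hl, fun l' hl' => hlen.trans (hl' ▸ card_inversions_prod_le_length l')⟩

lemma IsReducedWord.length_eq_card_inversions {w : Perm (Fin n)} {l : List (Fin (n - 1))}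
    (h : IsReducedWord n w l) : l.length = #(inversions w) := by
  obtain ⟨l', hl', hlen⟩ := exists_prod_eq_of_length_le_card_inversions w
  exact le_antisymm ((h.2 l' hl').trans hlen) (h.1 ▸ card_inversions_prod_le_length l)

lemma PreservesCut.apply_eq {k : ℕ} {u : Perm (Fin n)} (h₁ : PreservesCut k u)
    (h₂ : PreservesCut (k + 1) u) {j : Fin n} (hj : (j : ℕ) = k + 1) : u j = j := by
  have := h₁ j
  have := h₂ j
  exact Fin.ext (by omega)

lemma mem_of_mem_crossUp {l : List (Fin (n - 1))} {c : Fin (n - 1)} {a : Fin n}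
    (ha : a ∈ crossUp c (l.map (sgen n)).prod) : c ∈ l :=
  not_not.mp fun hc => not_preservesCut_of_mem_crossUp ha (preservesCut_prod hc)

/-- The letters other than `c` and `c + 1` fix `j`, and the single occurrence of `c` or `c + 1`
that remains sends `j` across a cut preserved by the rest of the word. -/
lemma prod_apply_ne_of_mem_of_mem {l : List (Fin (n - 1))} (hl : l.Nodup) {c d : Fin (n - 1)}
    (hc : c ∈ l) (hd : d ∈ l) (hcd : (d : ℕ) = c + 1) {j : Fin n} (hj : (j : ℕ) = d) :
    (l.map (sgen n)).prod j ≠ j := by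
  obtain ⟨s, t, rfl, hcs, hct, hst⟩ := hl.exists_eq_append_cons hc
  have hdc : d ≠ c := fun h => by rw [h] at hcd; omega
  simp only [List.map_append, List.map_cons, List.prod_append, List.prod_cons, Perm.mul_apply]
  rcases List.mem_append.mp hd with hds | hdt
  · rw [(preservesCut_prod hct).apply_eq (hcd ▸ preservesCut_prod (hst d hds)) (hj.trans hcd)]
    intro h
    have := preservesCut_prod hcs (sgen n c j)
    rw [h, val_sgen_apply] at this
    split_ifs at this <;> omega
  · have hdt : d ∈ t := (List.mem_cons.mp hdt).resolve_left hdc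
    have hds : d ∉ s := fun h => hst d h hdt
    have hu := (preservesCut_prod hcs).apply_eq (hcd ▸ preservesCut_prod hds) (hj.trans hcd)
    intro h
    have h' := congrArg Fin.val (Equiv.injective _ (h.trans hu.symm))
    have := preservesCut_prod hct j
    rw [val_sgen_apply] at h'
    split_ifs at h' <;> omega

lemma not_contains321_of_nodup {l : List (Fin (n - 1))} (hl : l.Nodup) {w : Perm (Fin n)}
    (hw : (l.map (sgen n)).prod = w) : ¬ Contains321 w := by
  have hup : ∀ k, #(crossUp k w) ≤ 1 := hw ▸ card_crossUp_le_one_of_nodup hl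
  have hdown : ∀ k, #(crossDown k w) ≤ 1 := hw ▸ card_crossDown_le_one_of_nodup hl
  rintro ⟨i, j, k, hij, hjk, hkj, hji⟩
  rcases lt_trichotomy (j : ℕ) (w j) with h | h | h
  · have := card_le_one.mp (hup j) i (by simp; omega) j (by simp; omega)
    omega
  · have hc : (⟨j - 1, by omega⟩ : Fin (n - 1)) ∈ l :=
      mem_of_mem_crossUp (a := i) (by simp [hw]; omega)
    have hd : (⟨j, by omega⟩ : Fin (n - 1)) ∈ l :=
      mem_of_mem_crossUp (a := i) (by simp [hw]; omega)
    exact prod_apply_ne_of_mem_of_mem hl hc hd (by simp; omega) rfl (hw ▸ Fin.ext h.symm)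
  · have := card_le_one.mp (hdown (w j)) j (by simp; omega) k (by simp; omega)
    omega

lemma not_contains3412_of_nodup {l : List (Fin (n - 1))} (hl : l.Nodup) {w : Perm (Fin n)}
    (hw : (l.map (sgen n)).prod = w) : ¬ Contains3412 w := by
  have hup : ∀ k, #(crossUp k w) ≤ 1 := hw ▸ card_crossUp_le_one_of_nodup hl
  have hdown : ∀ k, #(crossDown k w) ≤ 1 := hw ▸ card_crossDown_le_one_of_nodup hl
  rintro ⟨i, j, k, m, hij, hjk, hkm, hkm', hmi, hij'⟩
  by_cases h : (j : ℕ) < w i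
  · have := card_le_one.mp (hup j) i (by simp; omega) j (by simp; omega)
    omega
  · have := card_le_one.mp (hdown j) k (by simp; omega) m (by simp; omega)
    omega

lemma Contains321.of_inv {w : Perm (Fin n)} (h : Contains321 w⁻¹) : Contains321 w := by
  obtain ⟨i, j, k, hij, hjk, hkj, hji⟩ := h
  exact ⟨w⁻¹ k, w⁻¹ j, w⁻¹ i, hkj, hji, by simpa using hij, by simpa using hjk⟩

/-- Otherwise `w` maps the `a + 2` positions `{0, …, a, b}` injectively into `{0, …, w a}`. -/
lemma lt_apply_of_inversion {w : Perm (Fin n)} (h : ¬ Contains321 w) {a b : Fin n}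
    (hab : a < b) (hw : w b < w a) : a < w a := by
  refine lt_of_not_ge fun hle => ?_
  have hmaps : Set.MapsTo w ↑(insert b (Iic a)) ↑(Iic (w a)) := by
    intro x hx
    simp only [coe_insert, coe_Iic, Set.mem_insert_iff, Set.mem_Iic] at hx ⊢
    rcases hx with rfl | hx
    · exact hw.le
    · rcases hx.lt_or_eq with hx | rfl
      · exact le_of_not_gt fun hxa => h ⟨x, a, b, hx, hab, hw, hxa⟩
      · exact le_rfl
  have := card_le_card_of_injOn w hmaps w.injective.injOn
  rw [card_insert_of_notMem (by simpa using hab), Fin.card_Iic, Fin.card_Iic] at this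
  omega

lemma apply_lt_of_inversion {w : Perm (Fin n)} (h : ¬ Contains321 w) {a b : Fin n}
    (hab : a < b) (hw : w b < w a) : w b < b := by
  simpa using lt_apply_of_inversion (fun h' => h h'.of_inv) hw (w := w⁻¹) (b := w a)
    (by simpa using hab)

lemma contains321_or_contains3412_of_one_lt_card_crossUp {w : Perm (Fin n)} {k : ℕ}
    (h : 1 < #(crossUp k w)) : Contains321 w ∨ Contains3412 w := by
  obtain ⟨a₁, ha₁, a₂, ha₂, ha⟩ := exists_mem_lt_of_one_lt_card h
  obtain ⟨b₁, hb₁, b₂, hb₂, hb⟩ :=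
    exists_mem_lt_of_one_lt_card (card_crossUp_eq_card_crossDown k w ▸ h)
  simp only [mem_crossUp, mem_crossDown] at ha₁ ha₂ hb₁ hb₂
  rcases lt_or_gt_of_ne (w.injective.ne ha.ne) with hwa | hwa
  · rcases lt_or_gt_of_ne (w.injective.ne hb.ne) with hwb | hwb
    · exact .inr ⟨a₁, a₂, b₁, b₂, ha, by omega, hb, hwb, by omega, hwa⟩
    · exact .inl ⟨a₂, b₁, b₂, by omega, hb, hwb, by omega⟩
  · exact .inl ⟨a₁, a₂, b₁, ha, by omega, by omega, hwa⟩

lemma mem_crossUp_and_mem_crossDown_of_mem_inversions {w : Perm (Fin n)}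
    (h : ¬ Contains321 w) {p : Fin n × Fin n} (hp : p ∈ inversions w) :
    p.1 ∈ crossUp (max (p.1 : ℕ) (w p.2)) w ∧ p.2 ∈ crossDown (max (p.1 : ℕ) (w p.2)) w := by
  rw [mem_inversions] at hp
  have := lt_apply_of_inversion h hp.1 hp.2
  have := apply_lt_of_inversion h hp.1 hp.2
  simp only [mem_crossUp, mem_crossDown]
  omega

/-- An inversion `(a, b)` is determined by the cut `max a (w b)`, which `a` crosses upwards and
`b` downwards. -/
lemma card_inversions_le_card_letterSupport {w : Perm (Fin n)} (h321 : ¬ Contains321 w)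
    (h3412 : ¬ Contains3412 w) : #(inversions w) ≤ #(letterSupport w) := by
  have hup (k : ℕ) : #(crossUp k w) ≤ 1 :=
    le_of_not_gt fun h => (contains321_or_contains3412_of_one_lt_card_crossUp h).elim h321 h3412
  have hdown (k : ℕ) : #(crossDown k w) ≤ 1 := card_crossUp_eq_card_crossDown k w ▸ hup k
  rw [← card_map Fin.valEmbedding]
  refine card_le_card_of_injOn (fun p => max (p.1 : ℕ) (w p.2)) (fun p hp => ?_)
    (fun p hp q hq hpq => ?_)
  · obtain ⟨hp₁, hp₂⟩ := mem_crossUp_and_mem_crossDown_of_mem_inversions h321 hp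
    rw [mem_crossDown] at hp₂
    exact mem_map.mpr ⟨⟨_, by omega⟩,
      mem_letterSupport.mpr (not_preservesCut_of_mem_crossUp hp₁), rfl⟩
  · obtain ⟨hp₁, hp₂⟩ := mem_crossUp_and_mem_crossDown_of_mem_inversions h321 hp
    obtain ⟨hq₁, hq₂⟩ := mem_crossUp_and_mem_crossDown_of_mem_inversions h321 hq
    simp only at hpq
    rw [hpq] at hp₁ hp₂
    exact Prod.ext (card_le_one.mp (hup _) _ hp₁ _ hq₁)
      (card_le_one.mp (hdown _) _ hp₂ _ hq₂)

end

/-- For `w ∈ S_n`, the following are equivalent: (1) `w` avoids `321` and `3412`;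
(2) some reduced word for `w` has all distinct letters; (3) every reduced word for
`w` has all distinct letters. -/
theorem avoids_321_3412_iff_reduced_words_distinct (n : ℕ) (w : Equiv.Perm (Fin n)) :
    ((¬Contains321 w ∧ ¬Contains3412 w) ↔
      ∃ l : List (Fin (n - 1)), IsReducedWord n w l ∧ l.Nodup) ∧
    ((∃ l : List (Fin (n - 1)), IsReducedWord n w l ∧ l.Nodup) ↔
      ∀ l : List (Fin (n - 1)), IsReducedWord n w l → l.Nodup) := by
  obtain ⟨l₀, hl₀⟩ := exists_isReducedWord w
  have hnodup {l} (hl : IsReducedWord n w l) (hlen : #(inversions w) ≤ #(letterSupport w)) :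
      l.Nodup :=
    nodup_of_length_le_card_letterSupport (hl.1 ▸ hl.length_eq_card_inversions ▸ hlen)
  refine ⟨⟨fun ⟨h321, h3412⟩ => ⟨l₀, hl₀, hnodup hl₀ ?_⟩, fun ⟨l, hl, hnd⟩ => ?_⟩,
    ⟨fun ⟨l, hl, hnd⟩ l' hl' => hnodup hl' ?_, fun h => ⟨l₀, hl₀, h l₀ hl₀⟩⟩⟩
  · exact card_inversions_le_card_letterSupport h321 h3412
  · exact ⟨not_contains321_of_nodup hnd hl.1, not_contains3412_of_nodup hnd hl.1⟩
  · calc #(inversions w) = l.length := hl.length_eq_card_inversions.symm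
      _ = #l.toFinset := (List.toFinset_card_of_nodup hnd).symm
      _ ≤ #(letterSupport w) := card_le_card (hl.1 ▸ toFinset_subset_letterSupport hnd)
end

section
/- Let G be a Coxeter group with generating set S, and let w ∈ G have a reduced word containing some generator s at least twice. Then the principal order ideal of w in the Bruhat order is not a lattice; specifically, there exist generators s, t with st ≠ ts such that the four elements s, t, st, ts all lie below w in Bruhat order, and s and t have no join within the ideal. -/
/-!
If every letter strictly between two occurrences of `s` in a reduced word commuted with `s`,
the two occurrences would cancel and the word would not be reduced. So some letter `t` in
between does not commute with `s`, and both `st` and `ts` are reduced subwords, hence lie below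
`w`. Both are upper bounds of `s` and `t` of length `2`, so a join `z` would lie below both:
if `ℓ(z) ≤ 1` then `s = z = t`, and if `ℓ(z) = 2` then `st = z = ts`.
-/

/-- Bruhat order on a Coxeter group, via the subword property: `v ≤ w` iff some
reduced word of `v` is a (not necessarily consecutive) subword of some reduced
word of `w`. -/
def CoxeterBruhatLe {B W : Type*} [Group W] {M : CoxeterMatrix B}
    (cs : CoxeterSystem M W) (v w : W) : Prop :=
  ∃ lw lv : List B, cs.IsReduced lw ∧ cs.wordProd lw = w ∧
    cs.IsReduced lv ∧ cs.wordProd lv = v ∧ lv.Sublist lw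

theorem List.exists_eq_append_cons_append_cons_of_duplicate {α : Type*} {x : α} {l : List α}
    (h : List.Duplicate x l) : ∃ l₁ l₂ l₃, l = l₁ ++ x :: l₂ ++ x :: l₃ := by
  obtain ⟨r₁, r₂, rfl, hx₁, hx₂⟩ := List.cons_sublist_iff.mp (List.duplicate_iff_sublist.mp h)
  obtain ⟨a, b, rfl⟩ := List.append_of_mem hx₁
  obtain ⟨c, d, rfl⟩ := List.append_of_mem (List.singleton_sublist.mp hx₂)
  exact ⟨a, b ++ c, d, by simp⟩

namespace CoxeterSystem

variable {B W : Type*} [Group W] {M : CoxeterMatrix B} (cs : CoxeterSystem M W)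

@[simp]
theorem wordProd_pair (i j : B) : cs.wordProd [i, j] = cs.simple i * cs.simple j := by
  simp [wordProd_cons]

theorem isReduced_singleton (i : B) : cs.IsReduced [i] := by
  simp [IsReduced, length_simple]

theorem length_simple_mul_simple_of_not_commute {i j : B}
    (h : ¬Commute (cs.simple i) (cs.simple j)) : cs.length (cs.simple i * cs.simple j) = 2 := by
  have hne : cs.simple i * cs.simple j ≠ 1 := fun h1 => h <| by
    rw [eq_inv_of_mul_eq_one_left h1, inv_simple]
  have hlen_ne_zero := cs.length_eq_zero_iff.not.mpr hne
  have hlen_cases := cs.length_simple_mul (cs.simple j) i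
  rw [length_simple] at hlen_cases
  omega

theorem isReduced_pair_of_not_commute {i j : B} (h : ¬Commute (cs.simple i) (cs.simple j)) :
    cs.IsReduced [i, j] := by
  simpa [IsReduced] using cs.length_simple_mul_simple_of_not_commute h

theorem exists_mem_not_commute_of_isReduced {l₁ l₂ l₃ : List B} {i : B}
    (hred : cs.IsReduced (l₁ ++ i :: l₂ ++ i :: l₃)) :
    ∃ j ∈ l₂, ¬Commute (cs.simple i) (cs.simple j) := by
  by_contra! hcomm
  have hcomm_l₂ : Commute (cs.simple i) (cs.wordProd l₂) :=
    Commute.list_prod_right _ _ (by simpa using hcomm)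
  have hprod : cs.wordProd (l₁ ++ i :: l₂ ++ i :: l₃) = cs.wordProd (l₁ ++ l₂ ++ l₃) := by
    simp only [wordProd_append, wordProd_cons, mul_assoc, hcomm_l₂.left_comm,
      simple_mul_simple_cancel_left]
  have hlen := cs.length_wordProd_le (l₁ ++ l₂ ++ l₃)
  rw [← hprod, hred] at hlen
  simp at hlen

theorem exists_not_commute_of_duplicate {l : List B} {i : B} (hred : cs.IsReduced l)
    (h : List.Duplicate i l) :
    ∃ j, ¬Commute (cs.simple i) (cs.simple j) ∧ [i, j].Sublist l ∧ [j, i].Sublist l := by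
  obtain ⟨l₁, l₂, l₃, rfl⟩ := List.exists_eq_append_cons_append_cons_of_duplicate h
  obtain ⟨j, hj, hij⟩ := cs.exists_mem_not_commute_of_isReduced hred
  obtain ⟨a, b, rfl⟩ := List.append_of_mem hj
  refine ⟨j, hij, ?_, ?_⟩
  · simp
  · exact (List.singleton_sublist.mpr (by simp)).append (List.singleton_sublist.mpr (by simp))

end CoxeterSystem

namespace CoxeterBruhatLe

variable {B W : Type*} [Group W] {M : CoxeterMatrix B} {cs : CoxeterSystem M W}

theorem of_sublist {lv lw : List B} (hv : cs.IsReduced lv) (hw : cs.IsReduced lw)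
    (h : lv.Sublist lw) : CoxeterBruhatLe cs (cs.wordProd lv) (cs.wordProd lw) :=
  ⟨lw, lv, hw, rfl, hv, rfl, h⟩

theorem simple_of_mem {l : List B} {i : B} (hl : cs.IsReduced l) (hi : i ∈ l) :
    CoxeterBruhatLe cs (cs.simple i) (cs.wordProd l) := by
  simpa using of_sublist (cs.isReduced_singleton i) hl (List.singleton_sublist.mpr hi)

theorem simple_mul_simple_of_sublist {l : List B} {i j : B} (hl : cs.IsReduced l)
    (hij : ¬Commute (cs.simple i) (cs.simple j)) (h : [i, j].Sublist l) :
    CoxeterBruhatLe cs (cs.simple i * cs.simple j) (cs.wordProd l) := by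
  simpa using of_sublist (cs.isReduced_pair_of_not_commute hij) hl h

theorem simple_le_mul_simple {i j : B} (hij : ¬Commute (cs.simple i) (cs.simple j)) :
    CoxeterBruhatLe cs (cs.simple i) (cs.simple i * cs.simple j) := by
  simpa using simple_of_mem (cs.isReduced_pair_of_not_commute hij) (by simp)

theorem simple_le_simple_mul {i j : B} (hij : ¬Commute (cs.simple i) (cs.simple j)) :
    CoxeterBruhatLe cs (cs.simple j) (cs.simple i * cs.simple j) := by
  simpa using simple_of_mem (cs.isReduced_pair_of_not_commute hij) (by simp)

theorem eq_of_length_le {v w : W} (h : CoxeterBruhatLe cs v w)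
    (hlen : cs.length w ≤ cs.length v) : v = w := by
  obtain ⟨lw, lv, hw, rfl, hv, rfl, hsub⟩ := h
  rw [hv, hw] at hlen
  rw [hsub.eq_of_length_le hlen]

theorem not_exists_join_of_not_commute {i j : B} {w : W}
    (hij : ¬Commute (cs.simple i) (cs.simple j))
    (hijw : CoxeterBruhatLe cs (cs.simple i * cs.simple j) w)
    (hjiw : CoxeterBruhatLe cs (cs.simple j * cs.simple i) w) :
    ¬∃ z : W, CoxeterBruhatLe cs z w ∧
      CoxeterBruhatLe cs (cs.simple i) z ∧ CoxeterBruhatLe cs (cs.simple j) z ∧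
      ∀ z' : W, CoxeterBruhatLe cs z' w →
        CoxeterBruhatLe cs (cs.simple i) z' → CoxeterBruhatLe cs (cs.simple j) z' →
        CoxeterBruhatLe cs z z' := by
  rintro ⟨z, -, hiz, hjz, hleast⟩
  have hji : ¬Commute (cs.simple j) (cs.simple i) := fun h => hij h.symm
  have hz_ij := hleast _ hijw (simple_le_mul_simple hij) (simple_le_simple_mul hij)
  have hz_ji := hleast _ hjiw (simple_le_simple_mul hji) (simple_le_mul_simple hji)
  have hlen_ij := cs.length_simple_mul_simple_of_not_commute hij
  have hlen_ji := cs.length_simple_mul_simple_of_not_commute hji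
  rcases Nat.lt_or_ge (cs.length z) 2 with hlt | hge
  · have hzi := hiz.eq_of_length_le (by rw [cs.length_simple]; omega)
    have hzj := hjz.eq_of_length_le (by rw [cs.length_simple]; omega)
    exact hij (by rw [hzi, ← hzj])
  · have hz_eq_ij := hz_ij.eq_of_length_le (by omega)
    have hz_eq_ji := hz_ji.eq_of_length_le (by omega)
    exact hij (hz_eq_ij.symm.trans hz_eq_ji)

end CoxeterBruhatLe

/-- If `w` has a reduced word in which some generator appears at least twice, then
there are non-commuting generators `s = simple i` and `t = simple j` with
`s, t, st, ts` all below `w` in Bruhat order, such that `s` and `t` have no join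
within the principal order ideal of `w`; in particular that ideal is not a lattice. -/
theorem bruhat_poi_not_lattice_of_repeated_letter {B W : Type*} [Group W] [DecidableEq B]
    {M : CoxeterMatrix B} (cs : CoxeterSystem M W) (w : W) (l : List B) (s : B)
    (hred : cs.IsReduced l) (hprod : cs.wordProd l = w) (hcount : 2 ≤ l.count s) :
    ∃ i j : B,
      cs.simple i * cs.simple j ≠ cs.simple j * cs.simple i ∧
      CoxeterBruhatLe cs (cs.simple i) w ∧
      CoxeterBruhatLe cs (cs.simple j) w ∧
      CoxeterBruhatLe cs (cs.simple i * cs.simple j) w ∧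
      CoxeterBruhatLe cs (cs.simple j * cs.simple i) w ∧
      ¬∃ z : W, CoxeterBruhatLe cs z w ∧
        CoxeterBruhatLe cs (cs.simple i) z ∧ CoxeterBruhatLe cs (cs.simple j) z ∧
        ∀ z' : W, CoxeterBruhatLe cs z' w →
          CoxeterBruhatLe cs (cs.simple i) z' → CoxeterBruhatLe cs (cs.simple j) z' →
          CoxeterBruhatLe cs z z' := by
  subst hprod
  obtain ⟨t, hst, hst_sub, hts_sub⟩ :=
    cs.exists_not_commute_of_duplicate hred (List.duplicate_iff_two_le_count.mpr hcount)
  have hts : ¬Commute (cs.simple t) (cs.simple s) := fun h => hst h.symm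
  have hstw := CoxeterBruhatLe.simple_mul_simple_of_sublist hred hst hst_sub
  have htsw := CoxeterBruhatLe.simple_mul_simple_of_sublist hred hts hts_sub
  exact ⟨s, t, hst, .simple_of_mem hred (hst_sub.subset (by simp)),
    .simple_of_mem hred (hts_sub.subset (by simp)), hstw, htsw,
    CoxeterBruhatLe.not_exists_join_of_not_commute hst hstw htsw⟩
end

section
/- Let G be a Coxeter group and w ∈ G an element that is a product of pairwise commuting generators s_1, ..., s_k (all distinct). Then the principal order ideal of w in the right weak order is isomorphic, as a poset, to the boolean lattice of subsets of {s_1, ..., s_k} ordered by inclusion. -/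
/-!
Words in distinct, pairwise commuting generators behave like sets of letters. Since conjugation by
the letters is trivial, the left inversion sequence of such a word `ω` is just `ω.map s`; by the
strong exchange condition, `s b` can shorten `π ω` only if `b` occurs in `ω`. Hence a word without
repeated letters is reduced, and, peeling off one letter at a time, every reduced word of `π ν` is a
permutation of `ν`. So the elements below `w = s₁ ⋯ sₖ` in the weak order are the products over
subsets of `{s₁, …, sₖ}`, and prefixes of reduced words correspond to inclusions of subsets.

The two classical inputs, the strong exchange condition and the injectivity of `b ↦ s b`, come from
Tits' representation of `W` on `W × ZMod 2` and from the geometric representation.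
-/

/-- Right weak order on a Coxeter group: `v ≤wk w` iff some reduced word of `v`
is a prefix of some reduced word of `w`. -/
def CoxeterWeakLe {B W : Type*} [Group W] {M : CoxeterMatrix B}
    (cs : CoxeterSystem M W) (v w : W) : Prop :=
  ∃ lw lv : List B, cs.IsReduced lw ∧ cs.wordProd lw = w ∧
    cs.IsReduced lv ∧ cs.wordProd lv = v ∧ lv <+: lw

lemma coxeterWeakLe_refl {B W : Type*} [Group W] {M : CoxeterMatrix B}
    (cs : CoxeterSystem M W) (w : W) : CoxeterWeakLe cs w w := by
  obtain ⟨ω, hω, rfl⟩ := cs.exists_isReduced w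
  exact ⟨ω, ω, hω, rfl, hω, rfl, List.prefix_refl ω⟩

open Finsupp

namespace Module.End

variable {V : Type*} [AddCommGroup V] [Module ℝ V] (g : Module.End ℝ V)

lemma sin_smul_pow_succ_apply {φ : ℝ} {u : V} (h : g (g u) = (2 * Real.cos φ) • g u - u) (j : ℕ) :
    Real.sin φ • (g ^ (j + 1)) u = Real.sin ((j + 1) * φ) • g u - Real.sin (j * φ) • u := by
  induction j with
  | zero => simp
  | succ j ih =>
    have hsin : Real.sin ((j + 1 + 1) * φ)
        = 2 * Real.sin ((j + 1) * φ) * Real.cos φ - Real.sin (j * φ) := by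
      rw [show (j + 1 + 1) * φ = (j + 1) * φ + φ by ring, show j * φ = (j + 1) * φ - φ by ring,
        Real.sin_add, Real.sin_sub]
      ring
    rw [pow_succ', mul_apply, ← map_smul, ih, map_sub, map_smul, map_smul, h]
    push_cast
    rw [hsin]
    module

lemma pow_apply_eq_self_of_apply_apply {m : ℕ} (hm : 3 ≤ m) {u : V}
    (h : g (g u) = (2 * Real.cos (2 * Real.pi / m)) • g u - u) : (g ^ m) u = u := by
  set φ := 2 * Real.pi / m
  have hm0 : (0 : ℝ) < m := by positivity
  have hmφ : m * φ = 2 * Real.pi := by simp only [φ]; field_simp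
  have hsin : 0 < Real.sin φ := by
    apply Real.sin_pos_of_pos_of_lt_pi (by positivity)
    rw [div_lt_iff₀ hm0]
    have : (3 : ℝ) ≤ m := by exact_mod_cast hm
    nlinarith [Real.pi_pos]
  have key := g.sin_smul_pow_succ_apply h (m - 1)
  have hcast : ((m - 1 : ℕ) : ℝ) + 1 = m := by
    rw [Nat.cast_sub (by omega)]
    ring
  rw [Nat.sub_add_cancel (by omega), hcast, hmφ, Real.sin_two_pi, zero_smul, zero_sub,
    show ((m - 1 : ℕ) : ℝ) * φ = 2 * Real.pi - φ by rw [← hmφ, ← hcast]; ring,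
    Real.sin_two_pi_sub, neg_smul, neg_neg] at key
  exact smul_right_injective V hsin.ne' key

end Module.End

namespace CoxeterMatrix

variable {B : Type*} (M : CoxeterMatrix B)

/-- The Coxeter bilinear form `⟨α_b, α_b'⟩ = -cos (π / m)`; when `m = 0` (no relation),
`π / 0 = 0` gives the usual value `-1`. -/
noncomputable def bilinCoeff (b b' : B) : ℝ := -Real.cos (Real.pi / M b b')

lemma bilinCoeff_comm (b b' : B) : M.bilinCoeff b b' = M.bilinCoeff b' b := by
  rw [bilinCoeff, bilinCoeff, M.symmetric]

@[simp]
lemma bilinCoeff_self (b : B) : M.bilinCoeff b b = 1 := by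
  simp [bilinCoeff]

lemma two_le_of_ne_of_ne_zero {b b' : B} (h : b ≠ b') (h0 : M b b' ≠ 0) : 2 ≤ M b b' := by
  have := M.off_diagonal b b' h
  omega

lemma sq_bilinCoeff_lt_one {b b' : B} (h : b ≠ b') (h0 : M b b' ≠ 0) :
    M.bilinCoeff b b' ^ 2 < 1 := by
  have hm : (2 : ℝ) ≤ M b b' := by exact_mod_cast M.two_le_of_ne_of_ne_zero h h0
  have hpos : 0 < Real.pi / M b b' := by positivity
  have hlt : Real.pi / M b b' < Real.pi := by
    rw [div_lt_iff₀ (by linarith)]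
    nlinarith [Real.pi_pos]
  have hsin := Real.sin_pos_of_pos_of_lt_pi hpos hlt
  have := Real.sin_sq_add_cos_sq (Real.pi / M b b')
  rw [bilinCoeff, neg_sq]
  nlinarith

noncomputable def rootPairing (b : B) : (B →₀ ℝ) →ₗ[ℝ] ℝ :=
  linearCombination ℝ (M.bilinCoeff b)

@[simp]
lemma rootPairing_single (b b' : B) (x : ℝ) :
    M.rootPairing b (single b' x) = x * M.bilinCoeff b b' := by
  simp [rootPairing, linearCombination_single]

noncomputable def geomReflection (b : B) : Module.End ℝ (B →₀ ℝ) :=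
  LinearMap.id - (M.rootPairing b).smulRight (single b 2)

lemma geomReflection_apply (b : B) (v : B →₀ ℝ) :
    M.geomReflection b v = v - M.rootPairing b v • single b 2 := rfl

lemma geomReflection_apply_of_rootPairing_eq_zero {b : B} {v : B →₀ ℝ}
    (h : M.rootPairing b v = 0) : M.geomReflection b v = v := by
  simp [geomReflection_apply, h]

lemma geomReflection_mul_self (b : B) : M.geomReflection b * M.geomReflection b = 1 := by
  refine LinearMap.ext fun v => ?_
  simp only [Module.End.mul_apply, geomReflection_apply, map_sub, map_smul, rootPairing_single,
    bilinCoeff_self, Module.End.one_apply]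
  module

noncomputable def planeVec (c d : B) (x y : ℝ) : B →₀ ℝ := x • single c 1 + y • single d 1

lemma geomReflection_mul_apply_planeVec (c d : B) (x y : ℝ) :
    (M.geomReflection c * M.geomReflection d) (planeVec c d x y) =
      planeVec c d ((4 * M.bilinCoeff c d ^ 2 - 1) * x + 2 * M.bilinCoeff c d * y)
        (-(2 * M.bilinCoeff c d * x) - y) := by
  simp only [Module.End.mul_apply, geomReflection_apply, planeVec, map_sub, map_add, map_smul,
    rootPairing_single, bilinCoeff_self, M.bilinCoeff_comm d c]
  rw [show (single c 2 : B →₀ ℝ) = (2 : ℝ) • single c 1 by simp,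
    show (single d 2 : B →₀ ℝ) = (2 : ℝ) • single d 1 by simp]
  module

lemma geomReflection_mul_apply_apply_planeVec (c d : B) (x y : ℝ) :
    (M.geomReflection c * M.geomReflection d)
        ((M.geomReflection c * M.geomReflection d) (planeVec c d x y)) =
      (4 * M.bilinCoeff c d ^ 2 - 2) •
        (M.geomReflection c * M.geomReflection d) (planeVec c d x y) - planeVec c d x y := by
  rw [geomReflection_mul_apply_planeVec, geomReflection_mul_apply_planeVec]
  simp only [planeVec]
  module

lemma pow_geomReflection_mul_apply_planeVec {c d : B} (h : c ≠ d) (h0 : M c d ≠ 0) (x y : ℝ) :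
    ((M.geomReflection c * M.geomReflection d) ^ M c d) (planeVec c d x y) = planeVec c d x y := by
  rcases (M.two_le_of_ne_of_ne_zero h h0).eq_or_lt with h2 | h3
  · have hK : M.bilinCoeff c d = 0 := by simp [bilinCoeff, ← h2]
    rw [← h2, pow_two, Module.End.mul_apply, geomReflection_mul_apply_planeVec,
      geomReflection_mul_apply_planeVec, hK]
    norm_num
  · apply Module.End.pow_apply_eq_self_of_apply_apply _ h3
    rw [geomReflection_mul_apply_apply_planeVec]
    congr 3
    rw [bilinCoeff, mul_div_assoc, Real.cos_two_mul]
    ring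

lemma exists_rootPairing_sub_planeVec_eq_zero {c d : B} (h : c ≠ d) (h0 : M c d ≠ 0)
    (v : B →₀ ℝ) : ∃ x y, M.rootPairing c (v - planeVec c d x y) = 0 ∧
      M.rootPairing d (v - planeVec c d x y) = 0 := by
  have hD : 1 - M.bilinCoeff c d ^ 2 ≠ 0 := by linarith [M.sq_bilinCoeff_lt_one h h0]
  refine ⟨(M.rootPairing c v - M.bilinCoeff c d * M.rootPairing d v) / (1 - M.bilinCoeff c d ^ 2),
    (M.rootPairing d v - M.bilinCoeff c d * M.rootPairing c v) / (1 - M.bilinCoeff c d ^ 2),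
    ?_, ?_⟩ <;>
  · simp only [planeVec, map_sub, map_add, map_smul, rootPairing_single, bilinCoeff_self,
      M.bilinCoeff_comm d c, smul_eq_mul]
    field_simp
    ring

theorem isLiftable_geomReflection : M.IsLiftable M.geomReflection := by
  intro c d
  rcases eq_or_ne c d with rfl | h
  · rw [M.diagonal, pow_one, geomReflection_mul_self]
  rcases eq_or_ne (M c d) 0 with h0 | h0
  · rw [h0, pow_zero]
  -- `σ c * σ d` fixes the common kernel of the two root pairings and rotates their plane.
  refine LinearMap.ext fun v => ?_
  obtain ⟨x, y, hc, hd⟩ := M.exists_rootPairing_sub_planeVec_eq_zero h h0 v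
  have hfix : Function.IsFixedPt (M.geomReflection c * M.geomReflection d)
      (v - planeVec c d x y) := by
    rw [Function.IsFixedPt, Module.End.mul_apply,
      geomReflection_apply_of_rootPairing_eq_zero _ hd,
      geomReflection_apply_of_rootPairing_eq_zero _ hc]
  rw [Module.End.one_apply, ← sub_add_cancel v (planeVec c d x y), map_add,
    pow_geomReflection_mul_apply_planeVec _ h h0, Module.End.coe_pow, hfix.iterate]

end CoxeterMatrix

namespace CoxeterSystem

variable {B W : Type*} [Group W] {M : CoxeterMatrix B} (cs : CoxeterSystem M W)

local prefix:100 "s" => cs.simple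
local prefix:100 "π" => cs.wordProd
local prefix:100 "ℓ" => cs.length
local prefix:100 "lis " => cs.leftInvSeq

noncomputable def geometricRepresentation : W →* Module.End ℝ (B →₀ ℝ) :=
  cs.lift ⟨M.geomReflection, M.isLiftable_geomReflection⟩

theorem simple_injective : Function.Injective cs.simple := by
  intro b b' h
  by_contra hne
  have hrefl : M.geomReflection b = M.geomReflection b' := by
    simpa [geometricRepresentation] using congrArg cs.geometricRepresentation h
  have := congrArg (fun f : Module.End ℝ (B →₀ ℝ) => f (single b 1) b) hrefl
  simp [CoxeterMatrix.geomReflection_apply, hne] at this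

lemma prod_map_alternatingWord {G : Type*} [Monoid G] (f : B → G) (i j : B) (m : ℕ) :
    ((alternatingWord i j (2 * m)).map f).prod = (f i * f j) ^ m := by
  induction m with
  | zero => simp [alternatingWord]
  | succ m ih =>
    have h : alternatingWord i j (2 * (m + 1)) = i :: j :: alternatingWord i j (2 * m) := by
      rw [mul_add, mul_one, alternatingWord_succ', alternatingWord_succ']
      simp
    rw [h, List.map_cons, List.map_cons, List.prod_cons, List.prod_cons, ih, pow_succ', mul_assoc]

lemma leftInvSeq_alternatingWord (i j : B) (m : ℕ) :
    lis (alternatingWord i j (2 * m)) =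
      (List.range (2 * m)).map fun k => s i * (s j * s i) ^ k := by
  apply List.ext_getElem (by simp)
  intro k hk _
  rw [getElem_leftInvSeq_alternatingWord cs i j m k (by simpa using hk),
    prod_alternatingWord_eq_mul_pow]
  simp [Nat.mul_add_div]

lemma simple_mul_mul_simple_eq_simple_iff (i : B) (t : W) : s i * t * s i = s i ↔ t = s i := by
  constructor
  · intro h
    simpa [mul_assoc] using congrArg (fun x => s i * x * s i) h
  · rintro rfl
    simp

section TitsRepresentation

variable [DecidableEq W]

lemma even_count_leftInvSeq_alternatingWord (i j : B) (t : W) :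
    Even ((lis (alternatingWord i j (2 * M i j))).count t) := by
  have hper : (fun k => s i * (s j * s i) ^ k) ∘ (M i j + ·) = fun k => s i * (s j * s i) ^ k :=
    funext fun k => by simp [pow_add, M.symmetric i j]
  rw [leftInvSeq_alternatingWord, two_mul, List.range_add, List.map_append, List.map_map, hper,
    List.count_append]
  exact Even.add_self _

def titsPerm (i : B) : Equiv.Perm (W × ZMod 2) :=
  Function.Involutive.toPerm (fun x => (s i * x.1 * s i, x.2 + if x.1 = s i then 1 else 0)) <| by
    rintro ⟨t, ε⟩
    ext
    · simp [mul_assoc]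
    · show ε + _ + (if s i * t * s i = s i then 1 else 0) = ε
      simp only [simple_mul_mul_simple_eq_simple_iff]
      split_ifs <;> simp [add_assoc, CharTwo.add_self_eq_zero]

lemma titsPerm_apply (i : B) (x : W × ZMod 2) :
    cs.titsPerm i x = (s i * x.1 * s i, x.2 + if x.1 = s i then 1 else 0) := rfl

lemma prod_map_titsPerm_apply (ω : List B) (t : W) (ε : ZMod 2) :
    (ω.map cs.titsPerm).prod ((π ω)⁻¹ * t * π ω, ε) = (t, ε + (lis ω).count t) := by
  induction ω generalizing t ε with
  | nil => simp
  | cons i ω ih =>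
    have hconj : (π (i :: ω))⁻¹ * t * π (i :: ω) = (π ω)⁻¹ * (s i * t * s i) * π ω := by
      rw [wordProd_cons, mul_inv_rev, inv_simple]
      group
    have hcount : (lis (i :: ω)).count t =
        (lis ω).count (s i * t * s i) + if t = s i then 1 else 0 := by
      have hmap :=
        List.count_map_of_injective (lis ω) _ (MulAut.conj (s i)).injective (s i * t * s i)
      rw [show MulAut.conj (s i) (s i * t * s i) = t by simp [mul_assoc]] at hmap
      simp only [leftInvSeq, List.count_cons, hmap, beq_iff_eq, @eq_comm _ (s i) t]
    rw [List.map_cons, List.prod_cons, Equiv.Perm.mul_apply, hconj, ih, titsPerm_apply, hcount]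
    simp only [simple_mul_mul_simple_eq_simple_iff]
    ext
    · simp [mul_assoc]
    · push_cast
      ring

theorem isLiftable_titsPerm : M.IsLiftable cs.titsPerm := by
  intro i j
  ext x : 1
  have hbraid : π (alternatingWord i j (2 * M i j)) = 1 := by
    simp [prod_alternatingWord_eq_mul_pow]
  have h := cs.prod_map_titsPerm_apply (alternatingWord i j (2 * M i j)) x.1 x.2
  rw [hbraid, inv_one, one_mul, mul_one,
    ZMod.natCast_eq_zero_iff_even.mpr (cs.even_count_leftInvSeq_alternatingWord i j x.1), add_zero,
    prod_map_alternatingWord] at h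
  simpa using h

def titsRep : W →* Equiv.Perm (W × ZMod 2) := cs.lift ⟨cs.titsPerm, cs.isLiftable_titsPerm⟩

lemma titsRep_wordProd (ω : List B) : cs.titsRep (π ω) = (ω.map cs.titsPerm).prod := by
  rw [wordProd, map_list_prod, List.map_map]
  congr 2
  funext i
  exact cs.lift_apply_simple cs.isLiftable_titsPerm i

/-- The parity of the number of occurrences of `t` in the left inversion sequence of a word for
`w`; it does not depend on the word (`inversionParity_wordProd`). -/
def inversionParity (w t : W) : ZMod 2 := (cs.titsRep w (w⁻¹ * t * w, 0)).2

lemma inversionParity_wordProd (ω : List B) (t : W) :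
    cs.inversionParity (π ω) t = (lis ω).count t := by
  simp [inversionParity, titsRep_wordProd, prod_map_titsPerm_apply]

lemma titsRep_apply (w t : W) (ε : ZMod 2) :
    cs.titsRep w (w⁻¹ * t * w, ε) = (t, ε + cs.inversionParity w t) := by
  obtain ⟨ω, rfl⟩ := cs.wordProd_surjective w
  rw [titsRep_wordProd, prod_map_titsPerm_apply, inversionParity_wordProd]

lemma inversionParity_mul (u v t : W) :
    cs.inversionParity (u * v) t =
      cs.inversionParity u t + cs.inversionParity v (u⁻¹ * t * u) := by
  have h := cs.titsRep_apply (u * v) t 0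
  rw [map_mul, Equiv.Perm.mul_apply,
    show (u * v)⁻¹ * t * (u * v) = v⁻¹ * (u⁻¹ * t * u) * v by group, titsRep_apply,
    titsRep_apply] at h
  have := congrArg Prod.snd h
  simp only [zero_add] at this
  rw [← this, add_comm]

lemma inversionParity_one (t : W) : cs.inversionParity 1 t = 0 := by
  simpa using cs.inversionParity_wordProd [] t

lemma inversionParity_self_of_isReflection {t : W} (ht : cs.IsReflection t) :
    cs.inversionParity t t = 1 := by
  obtain ⟨v, i, rfl⟩ := ht
  have hsimple : cs.inversionParity (s i) (s i) = 1 := by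
    simpa using cs.inversionParity_wordProd [i] (s i)
  have hinv := cs.inversionParity_mul v v⁻¹ (v * s i * v⁻¹)
  rw [mul_inv_cancel, inversionParity_one] at hinv
  have hconj : v⁻¹ * (v * s i * v⁻¹) * v = s i := by group
  have hconj' : (v * s i)⁻¹ * (v * s i * v⁻¹) * (v * s i) = s i := by
    rw [mul_inv_rev, inv_simple]
    group
    rw [simple_mul_simple_self, one_mul]
  rw [hconj] at hinv
  rw [inversionParity_mul, inversionParity_mul, hconj, hconj', hsimple, add_right_comm, ← hinv,
    zero_add]

lemma inversionParity_eq_one_iff_mem_leftInvSeq {ω : List B} (hω : cs.IsReduced ω) (t : W) :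
    cs.inversionParity (π ω) t = 1 ↔ t ∈ lis ω := by
  have hle : (lis ω).count t ≤ 1 := List.nodup_iff_count_le_one.mp hω.nodup_leftInvSeq t
  rw [inversionParity_wordProd, ← List.count_pos_iff]
  interval_cases (lis ω).count t <;> decide

lemma isLeftInversion_of_inversionParity_eq_one {w t : W} (h : cs.inversionParity w t = 1) :
    cs.IsLeftInversion w t := by
  obtain ⟨ω, hω, rfl⟩ := cs.exists_isReduced w
  exact cs.isLeftInversion_of_mem_leftInvSeq hω
    ((cs.inversionParity_eq_one_iff_mem_leftInvSeq hω t).mp h)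

theorem inversionParity_eq_one_iff {w t : W} (ht : cs.IsReflection t) :
    cs.inversionParity w t = 1 ↔ cs.IsLeftInversion w t := by
  refine ⟨cs.isLeftInversion_of_inversionParity_eq_one, fun ⟨_, hlt⟩ => ?_⟩
  by_contra hne
  have hzero : cs.inversionParity w t = 0 := by
    generalize cs.inversionParity w t = x at hne
    revert x
    decide
  have hflip : cs.inversionParity (t * w) t = 1 := by
    rw [inversionParity_mul, cs.inversionParity_self_of_isReflection ht,
      show t⁻¹ * t * t = t by group, hzero, add_zero]
  have := (cs.isLeftInversion_of_inversionParity_eq_one hflip).2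
  rw [← mul_assoc, ht.mul_self, one_mul] at this
  omega

end TitsRepresentation

/-- The strong exchange condition. -/
theorem mem_leftInvSeq_of_isLeftInversion {ω : List B} (hω : cs.IsReduced ω) {t : W}
    (h : cs.IsLeftInversion (π ω) t) : t ∈ lis ω := by
  classical
  exact (cs.inversionParity_eq_one_iff_mem_leftInvSeq hω t).mp
    ((cs.inversionParity_eq_one_iff h.1).mpr h)

section CommutingLetters

def LettersCommute (l : List B) : Prop := ∀ i ∈ l, ∀ j ∈ l, s i * s j = s j * s i

variable {cs} {l : List B}

lemma wordProd_eq_of_perm (hcomm : cs.LettersCommute l) {ω ω' : List B} (hω : ω ⊆ l)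
    (h : ω.Perm ω') : π ω = π ω' :=
  (h.map cs.simple).prod_eq' <| List.pairwise_map.mpr <|
    List.pairwise_of_forall_mem_list fun i hi j hj => hcomm i (hω hi) j (hω hj)

lemma leftInvSeq_eq_map_simple (hcomm : cs.LettersCommute l) {ω : List B} (hω : ω ⊆ l) :
    lis ω = ω.map cs.simple := by
  induction ω with
  | nil => rfl
  | cons i ω ih =>
    rw [leftInvSeq, ih (List.subset_of_cons_subset hω), List.map_map, List.map_cons]
    congr 1
    refine List.map_congr_left fun j hj => ?_
    simp [MulAut.conj_apply, hcomm i (hω List.mem_cons_self) j (hω (List.mem_cons_of_mem i hj)),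
      mul_assoc]

lemma mem_of_length_simple_mul_lt (hcomm : cs.LettersCommute l) {ω : List B} (hω : ω ⊆ l)
    (hred : cs.IsReduced ω) {i : B} (h : ℓ (s i * π ω) < ℓ (π ω)) : i ∈ ω := by
  have hmem := cs.mem_leftInvSeq_of_isLeftInversion hred ⟨cs.isReflection_simple i, h⟩
  rw [leftInvSeq_eq_map_simple hcomm hω, List.mem_map] at hmem
  obtain ⟨j, hj, hji⟩ := hmem
  rwa [← cs.simple_injective hji]

lemma isReduced_of_nodup (hcomm : cs.LettersCommute l) {ω : List B} (hω : ω ⊆ l)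
    (hnd : ω.Nodup) : cs.IsReduced ω := by
  induction ω with
  | nil => simp [IsReduced]
  | cons i ω ih =>
    have hω' := List.subset_of_cons_subset hω
    have hred := ih hω' (List.nodup_cons.mp hnd).2
    rcases cs.length_simple_mul (π ω) i with hlen | hlen
    · rw [IsReduced, wordProd_cons, hlen, hred, List.length_cons]
    · exact absurd (mem_of_length_simple_mul_lt hcomm hω' hred (by omega))
        (List.nodup_cons.mp hnd).1

lemma perm_of_isReduced_of_wordProd_eq (hcomm : cs.LettersCommute l) {ω ν : List B}
    (hν : ν ⊆ l) (hnd : ν.Nodup) (hω : cs.IsReduced ω) (h : π ω = π ν) : ω.Perm ν := by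
  classical
  induction ω generalizing ν with
  | nil =>
    have hlen := (isReduced_of_nodup hcomm hν hnd).eq
    rw [← h, wordProd_nil, length_one] at hlen
    rw [List.length_eq_zero_iff.mp hlen.symm]
  | cons i ω ih =>
    have hred : cs.IsReduced ω := by simpa using hω.drop 1
    have hν_red := isReduced_of_nodup hcomm hν hnd
    have hi : i ∈ ν := by
      refine mem_of_length_simple_mul_lt hcomm hν hν_red ?_
      rw [← h, wordProd_cons, cs.simple_mul_simple_cancel_left, hred.eq, ← wordProd_cons, hω.eq,
        List.length_cons]
      omega
    have hperm := List.perm_cons_erase hi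
    have herase : π ω = π (ν.erase i) := by
      rw [wordProd_eq_of_perm hcomm hν hperm, wordProd_cons, wordProd_cons] at h
      exact mul_left_cancel h
    have hν' : ν.erase i ⊆ l := fun _ hx => hν (List.erase_subset hx)
    exact ((ih hν' (hnd.erase i) hred herase).cons i).trans hperm.symm

theorem coxeterWeakLe_wordProd_iff (hcomm : cs.LettersCommute l) {ν ν' : List B} (hν : ν ⊆ l)
    (hν' : ν' ⊆ l) (hnd : ν.Nodup) (hnd' : ν'.Nodup) :
    CoxeterWeakLe cs (π ν) (π ν') ↔ ν ⊆ ν' := by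
  constructor
  · rintro ⟨lw, lv, hw, hpw, hv, hpv, hpre⟩
    have hpermw := perm_of_isReduced_of_wordProd_eq hcomm hν' hnd' hw hpw
    have hpermv := perm_of_isReduced_of_wordProd_eq hcomm hν hnd hv hpv
    exact fun b hb => hpermw.subset (hpre.subset (hpermv.symm.subset hb))
  · intro hsub
    obtain ⟨μ, hμ, hμν'⟩ := List.subperm_of_subset hnd hsub
    obtain ⟨ρ, hρ⟩ := hμν'.exists_perm_append
    have hperm : ν'.Perm (ν ++ ρ) := hρ.trans (hμ.append_right ρ)
    exact ⟨ν ++ ρ, ν,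
      isReduced_of_nodup hcomm (fun _ hb => hν' (hperm.symm.subset hb)) (hperm.nodup_iff.mp hnd'),
      (wordProd_eq_of_perm hcomm hν' hperm).symm, isReduced_of_nodup hcomm hν hnd, rfl,
      List.prefix_append ν ρ⟩

theorem exists_nodup_of_coxeterWeakLe (hcomm : cs.LettersCommute l) (hnd : l.Nodup) {v : W}
    (h : CoxeterWeakLe cs v (π l)) : ∃ ν ⊆ l, ν.Nodup ∧ v = π ν := by
  obtain ⟨lw, lv, hw, hpw, -, rfl, hpre⟩ := h
  have hperm := perm_of_isReduced_of_wordProd_eq hcomm (List.Subset.refl l) hnd hw hpw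
  exact ⟨lv, fun _ hb => hperm.subset (hpre.subset hb),
    hpre.sublist.nodup (hperm.nodup_iff.mpr hnd), rfl⟩

variable [DecidableEq B]

lemma toList_image_get_subset (T : Finset (Fin l.length)) : (T.image l.get).toList ⊆ l := by
  intro b hb
  obtain ⟨i, -, rfl⟩ := Finset.mem_image.mp (Finset.mem_toList.mp hb)
  exact l.get_mem i

theorem coxeterWeakLe_toList_image_get_iff (hcomm : cs.LettersCommute l) (hnd : l.Nodup)
    (T U : Finset (Fin l.length)) :
    CoxeterWeakLe cs (π (T.image l.get).toList) (π (U.image l.get).toList) ↔ T ⊆ U := by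
  rw [coxeterWeakLe_wordProd_iff hcomm (toList_image_get_subset T) (toList_image_get_subset U)
    (Finset.nodup_toList _) (Finset.nodup_toList _)]
  simp only [List.subset_def, Finset.mem_toList]
  exact Finset.image_subset_image_iff (List.nodup_iff_injective_get.mp hnd)

theorem exists_eq_wordProd_toList_image_get (hcomm : cs.LettersCommute l) (hnd : l.Nodup)
    {v : W} (h : CoxeterWeakLe cs v (π l)) :
    ∃ T : Finset (Fin l.length), v = π (T.image l.get).toList := by
  obtain ⟨ν, hν, hndν, rfl⟩ := exists_nodup_of_coxeterWeakLe hcomm hnd h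
  refine ⟨Finset.univ.filter (fun i => l.get i ∈ ν), wordProd_eq_of_perm hcomm hν
    ((List.perm_ext_iff_of_nodup hndν (Finset.nodup_toList _)).mpr fun b => ?_)⟩
  simp only [Finset.mem_toList, Finset.mem_image, Finset.mem_filter, Finset.mem_univ, true_and]
  constructor
  · intro hb
    obtain ⟨i, hi⟩ := List.mem_iff_get.mp (hν hb)
    exact ⟨i, hi ▸ hb, hi⟩
  · rintro ⟨i, hi, rfl⟩
    exact hi

end CommutingLetters

end CoxeterSystem

/-- If `w` is a product of pairwise commuting distinct generators `s_1, …, s_k`,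
then the principal order ideal of `w` in the right weak order is order-isomorphic
to the boolean lattice of subsets of `{s_1, …, s_k}` ordered by inclusion. -/
theorem weak_poi_boolean_of_commuting_generators {B W : Type*} [Group W]
    {M : CoxeterMatrix B} (cs : CoxeterSystem M W) (l : List B) (hnd : l.Nodup)
    (hcomm : ∀ i ∈ l, ∀ j ∈ l, cs.simple i * cs.simple j = cs.simple j * cs.simple i)
    (w : W) (hw : w = cs.wordProd l) :
    ∃ e : {v : W // CoxeterWeakLe cs v w} ≃ Finset (Fin l.length),
      ∀ a b : {v : W // CoxeterWeakLe cs v w},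
        CoxeterWeakLe cs a.1 b.1 ↔ e a ⊆ e b := by
  classical
  subst hw
  have hle := CoxeterSystem.coxeterWeakLe_toList_image_get_iff hcomm hnd
  have hbelow (T : Finset (Fin l.length)) :
      CoxeterWeakLe cs (cs.wordProd (T.image l.get).toList) (cs.wordProd l) :=
    (CoxeterSystem.coxeterWeakLe_wordProd_iff hcomm (CoxeterSystem.toList_image_get_subset T)
      (List.Subset.refl l) (Finset.nodup_toList _) hnd).mpr
      (CoxeterSystem.toList_image_get_subset T)
  let Φ (T : Finset (Fin l.length)) : {v : W // CoxeterWeakLe cs v (cs.wordProd l)} :=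
    ⟨_, hbelow T⟩
  have hΦ : Function.Bijective Φ := by
    refine ⟨fun T U hTU => ?_, fun ⟨v, hv⟩ => ?_⟩
    · have hval : cs.wordProd (T.image l.get).toList = cs.wordProd (U.image l.get).toList :=
        congrArg Subtype.val hTU
      refine subset_antisymm ((hle T U).mp ?_) ((hle U T).mp ?_) <;>
      · rw [hval]
        exact coxeterWeakLe_refl cs _
    · obtain ⟨T, rfl⟩ := CoxeterSystem.exists_eq_wordProd_toList_image_get hcomm hnd hv
      exact ⟨T, rfl⟩
  refine ⟨(Equiv.ofBijective Φ hΦ).symm, fun a b => ?_⟩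
  obtain ⟨T, rfl⟩ := hΦ.2 a
  obtain ⟨U, rfl⟩ := hΦ.2 b
  simpa only [Equiv.ofBijective_symm_apply_apply] using hle T U
end

section
/- The number of permutations in S_n avoiding both patterns 321 and 3412 is the Fibonacci number F_{2n-1}, with indexing F_0 = 0, F_1 = 1. -/
/-!
Let `a n` count the boolean permutations (those avoiding `321` and `3412`) of size `n`, and
`d n` those of size `n + 1` that move the last position. Deleting a fixed last point gives
`a (n + 1) = a n + d n`. A boolean permutation of size `n + 2` moving the last position either
has its maximum in the second-to-last position, or else its last entry is the second largest
value; in both cases that extremal entry lies in no occurrence of `321` or `3412`, and deleting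
it gives `d (n + 1) = a (n + 1) + d n`. This is the recurrence of `(F (2n + 1), F (2n))`.
-/

open Equiv Fin

theorem card_subtype_eq_card_and_add_card_and_not {α : Type*} [Finite α] (p q : α → Prop) :
    Nat.card {x // p x} = Nat.card {x // p x ∧ q x} + Nat.card {x // p x ∧ ¬q x} := by
  classical
  rw [← Nat.card_sum]
  exact Nat.card_congr ((Equiv.sumCompl fun x : {x // p x} => q x).symm.trans
    ((subtypeSubtypeEquivSubtypeInter p q).sumCongr
      (subtypeSubtypeEquivSubtypeInter p fun x => ¬q x)))

def IsBoolean {n : ℕ} (w : Perm (Fin n)) : Prop := ¬Contains321 w ∧ ¬Contains3412 w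

section Occurrences
variable {n : ℕ}

def Contains321At (w : Perm (Fin n)) (q : Fin n) : Prop :=
  ∃ i j k, i < j ∧ j < k ∧ w k < w j ∧ w j < w i ∧ (q = i ∨ q = j ∨ q = k)

def Contains3412At (w : Perm (Fin n)) (q : Fin n) : Prop :=
  ∃ i j k l, i < j ∧ j < k ∧ k < l ∧ w k < w l ∧ w l < w i ∧ w i < w j ∧
    (q = i ∨ q = j ∨ q = k ∨ q = l)

variable {W : Perm (Fin (n + 1))}

theorem not_contains321At_of_apply_eq_last {q : Fin (n + 1)} (hW : W q = last n)
    (hq : ∀ x, q < x → x = last n) : ¬Contains321At W q := by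
  rintro ⟨i, j, k, hij, hjk, hkj, hji, rfl | rfl | rfl⟩
  · exact hjk.ne ((hq j hij).trans (hq k (hij.trans hjk)).symm)
  · exact (hW ▸ hji).not_ge (le_last _)
  · exact (hW ▸ hkj).not_ge (le_last _)

theorem not_contains3412At_of_apply_eq_last {q : Fin (n + 1)} (hW : W q = last n)
    (hq : ∀ x, q < x → x = last n) : ¬Contains3412At W q := by
  rintro ⟨i, j, k, l, hij, hjk, hkl, hkl', hli, hij', rfl | rfl | rfl | rfl⟩
  · exact (hW ▸ hij').not_ge (le_last _)
  · exact hkl.ne ((hq k hjk).trans (hq l (hjk.trans hkl)).symm)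
  · exact (hW ▸ hkl').not_ge (le_last _)
  · exact (hW ▸ hli).not_ge (le_last _)

theorem not_contains321At_last (hW : ∀ x, W (last n) < x → x = last n) :
    ¬Contains321At W (last n) := by
  rintro ⟨i, j, k, hij, hjk, hkj, hji, h | h | h⟩
  · exact (h ▸ hij).not_ge (le_last _)
  · exact (h ▸ hjk).not_ge (le_last _)
  · subst h
    exact hij.ne (W.injective ((hW _ (hkj.trans hji)).trans (hW _ hkj).symm))

theorem not_contains3412At_last (hW : ∀ x, W (last n) < x → x = last n) :
    ¬Contains3412At W (last n) := by
  rintro ⟨i, j, k, l, hij, hjk, hkl, hkl', hli, hij', h | h | h | h⟩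
  · exact (h ▸ hij).not_ge (le_last _)
  · exact (h ▸ hjk).not_ge (le_last _)
  · exact (h ▸ hkl).not_ge (le_last _)
  · subst h
    exact hij.ne (W.injective ((hW _ hli).trans (hW _ (hli.trans hij')).symm))

end Occurrences

namespace Equiv.Perm
variable {n : ℕ}

def insertAt (q r : Fin (n + 1)) (w : Perm (Fin n)) : Perm (Fin (n + 1)) :=
  ((finSuccEquiv' q).trans w.optionCongr).trans (finSuccEquiv' r).symm

@[simp] theorem insertAt_apply_self (q r : Fin (n + 1)) (w : Perm (Fin n)) :
    insertAt q r w q = r := by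
  simp [insertAt, finSuccEquiv'_at]

@[simp] theorem insertAt_apply_succAbove (q r : Fin (n + 1)) (w : Perm (Fin n)) (i : Fin n) :
    insertAt q r w (q.succAbove i) = r.succAbove (w i) := by
  simp [insertAt, finSuccEquiv'_succAbove]

theorem insertAt_injective (q r : Fin (n + 1)) : Function.Injective (insertAt q r) := by
  intro w w' h
  ext i : 1
  simpa using congr($h (q.succAbove i))

def removeAt (q : Fin (n + 1)) (W : Perm (Fin (n + 1))) : Perm (Fin n) :=
  removeNone (((finSuccEquiv' q).symm.trans W).trans (finSuccEquiv' (W q)))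

theorem insertAt_removeAt (q : Fin (n + 1)) (W : Perm (Fin (n + 1))) :
    insertAt q (W q) (removeAt q W) = W := by
  ext x : 1
  simp [insertAt, removeAt, finSuccEquiv'_at]

theorem card_insertAt {q r : Fin (n + 1)} {P : Perm (Fin (n + 1)) → Prop}
    {Q : Perm (Fin n) → Prop} (h : ∀ w, P (insertAt q r w) ↔ Q w) :
    Nat.card {W // P W ∧ W q = r} = Nat.card {w // Q w} := by
  refine (Nat.card_congr (Equiv.ofBijective (fun w : {w // Q w} =>
    (⟨insertAt q r w, (h w).2 w.2, insertAt_apply_self q r w⟩ : {W // P W ∧ W q = r}))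
    ⟨fun w w' hw => Subtype.ext (insertAt_injective q r congr($hw.1)), ?_⟩)).symm
  rintro ⟨W, hP, rfl⟩
  exact ⟨⟨removeAt q W, (h _).1 (by rwa [insertAt_removeAt])⟩,
    Subtype.ext (insertAt_removeAt q W)⟩

variable {q r : Fin (n + 1)} {w : Perm (Fin n)}

theorem contains321_insertAt_iff (h : ¬Contains321At (insertAt q r w) q) :
    Contains321 (insertAt q r w) ↔ Contains321 w := by
  constructor
  · rintro ⟨i, j, k, hij, hjk, hkj, hji⟩
    obtain ⟨hi, hj, hk⟩ : i ≠ q ∧ j ≠ q ∧ k ≠ q := by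
      refine ⟨?_, ?_, ?_⟩ <;> rintro rfl <;> exact h ⟨_, _, _, hij, hjk, hkj, hji, by simp⟩
    obtain ⟨i, rfl⟩ := exists_succAbove_eq hi
    obtain ⟨j, rfl⟩ := exists_succAbove_eq hj
    obtain ⟨k, rfl⟩ := exists_succAbove_eq hk
    simp only [insertAt_apply_succAbove, succAbove_lt_succAbove_iff] at hij hjk hkj hji
    exact ⟨i, j, k, hij, hjk, hkj, hji⟩
  · rintro ⟨i, j, k, h⟩
    exact ⟨q.succAbove i, q.succAbove j, q.succAbove k, by simpa [succAbove_lt_succAbove_iff]⟩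

theorem contains3412_insertAt_iff (h : ¬Contains3412At (insertAt q r w) q) :
    Contains3412 (insertAt q r w) ↔ Contains3412 w := by
  constructor
  · rintro ⟨i, j, k, l, hij, hjk, hkl, hkl', hli, hij'⟩
    obtain ⟨hi, hj, hk, hl⟩ : i ≠ q ∧ j ≠ q ∧ k ≠ q ∧ l ≠ q := by
      refine ⟨?_, ?_, ?_, ?_⟩ <;> rintro rfl <;>
        exact h ⟨_, _, _, _, hij, hjk, hkl, hkl', hli, hij', by simp⟩
    obtain ⟨i, rfl⟩ := exists_succAbove_eq hi
    obtain ⟨j, rfl⟩ := exists_succAbove_eq hj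
    obtain ⟨k, rfl⟩ := exists_succAbove_eq hk
    obtain ⟨l, rfl⟩ := exists_succAbove_eq hl
    simp only [insertAt_apply_succAbove, succAbove_lt_succAbove_iff]
      at hij hjk hkl hkl' hli hij'
    exact ⟨i, j, k, l, hij, hjk, hkl, hkl', hli, hij'⟩
  · rintro ⟨i, j, k, l, h⟩
    exact ⟨q.succAbove i, q.succAbove j, q.succAbove k, q.succAbove l,
      by simpa [succAbove_lt_succAbove_iff]⟩

theorem isBoolean_insertAt_iff (h321 : ¬Contains321At (insertAt q r w) q)
    (h3412 : ¬Contains3412At (insertAt q r w) q) : IsBoolean (insertAt q r w) ↔ IsBoolean w := by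
  rw [IsBoolean, IsBoolean, contains321_insertAt_iff h321, contains3412_insertAt_iff h3412]

theorem isBoolean_insertAt_last_left_iff (hr : ∀ x, r < x → x = last n) :
    IsBoolean (insertAt (last n) r w) ↔ IsBoolean w := by
  have hW : ∀ x, insertAt (last n) r w (last n) < x → x = last n := by simpa using hr
  exact isBoolean_insertAt_iff (not_contains321At_last hW) (not_contains3412At_last hW)

theorem isBoolean_insertAt_last_right_iff (hq : ∀ x, q < x → x = last n) :
    IsBoolean (insertAt q (last n) w) ↔ IsBoolean w :=
  isBoolean_insertAt_iff (not_contains321At_of_apply_eq_last (by simp) hq)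
    (not_contains3412At_of_apply_eq_last (by simp) hq)

end Equiv.Perm

open Equiv.Perm

theorem eq_last_of_castSucc_last_lt {n : ℕ} {x : Fin (n + 2)} (h : (last n).castSucc < x) :
    x = last (n + 1) :=
  last_le_iff.1 (succ_last n ▸ castSucc_lt_iff_succ_le.1 h)

theorem IsBoolean.apply_last_eq {n : ℕ} {W : Perm (Fin (n + 2))} (hW : IsBoolean W)
    (hlast : W (last (n + 1)) ≠ last (n + 1)) (hmax : W (last n).castSucc ≠ last (n + 1)) :
    W (last (n + 1)) = (last n).castSucc := by
  by_contra hne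
  -- With `W p` the largest and `W q` the second largest value, `p < q` gives the `321`
  -- `(p, q, last)`; if `q < p`, then `(q, p, p + 1, last)` is a `3412` or `(p, p + 1, last)`
  -- a `321`.
  obtain ⟨p, hWp⟩ := W.surjective (last (n + 1))
  obtain ⟨q, hWq⟩ := W.surjective (last n).castSucc
  have hlast_lt : W (last (n + 1)) < (last n).castSucc := by
    rw [Ne, Fin.ext_iff] at hlast; rw [Fin.ext_iff] at hne
    rw [Fin.lt_def]; simp only [val_castSucc, val_last] at *; omega
  have hp : p.val < n := by
    have h1 : p ≠ last (n + 1) := by rintro rfl; exact hlast hWp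
    have h2 : p ≠ (last n).castSucc := by rintro rfl; exact hmax hWp
    rw [Ne, Fin.ext_iff] at h1 h2; simp only [val_castSucc, val_last] at h1 h2; omega
  have hq : q < last (n + 1) := (le_last q).lt_of_ne (by rintro rfl; exact hne hWq)
  have hpq : p ≠ q := by rintro rfl; exact (castSucc_lt_last (last n)).ne' (hWp.symm.trans hWq)
  have hmax_gt : W q < W p := hWq ▸ hWp ▸ castSucc_lt_last (last n)
  rcases hpq.lt_or_gt with hpq | hqp
  · exact hW.1 ⟨p, q, last (n + 1), hpq, hq, hWq ▸ hlast_lt, hmax_gt⟩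
  · set p' : Fin (n + 2) := ⟨p + 1, by omega⟩
    have hpp' : p < p' := by simp [Fin.lt_def, p']
    have hp'last : p' < last (n + 1) := by simp [Fin.lt_def, p']; omega
    rcases (W.injective.ne hp'last.ne).lt_or_gt with h | h
    · exact hW.2 ⟨q, p, p', last (n + 1), hqp, hpp', hp'last, h, hWq ▸ hlast_lt, hmax_gt⟩
    · exact hW.1 ⟨p, p', last (n + 1), hpp', hp'last, h,
        hWp ▸ (le_last _).lt_of_ne (hWp ▸ W.injective.ne hpp'.ne')⟩

section
variable (n : ℕ)

theorem card_isBoolean_succ :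
    Nat.card {w : Perm (Fin (n + 1)) // IsBoolean w} =
      Nat.card {w : Perm (Fin n) // IsBoolean w} +
        Nat.card {w : Perm (Fin (n + 1)) // IsBoolean w ∧ w (last n) ≠ last n} := by
  rw [card_subtype_eq_card_and_add_card_and_not _ fun w => w (last n) = last n,
    card_insertAt fun w => isBoolean_insertAt_last_left_iff fun x h => (h.not_ge (le_last x)).elim]

theorem card_isBoolean_apply_castSucc_last_eq_last :
    Nat.card {W : Perm (Fin (n + 2)) // (IsBoolean W ∧ W (last (n + 1)) ≠ last (n + 1)) ∧
      W (last n).castSucc = last (n + 1)} = Nat.card {w : Perm (Fin (n + 1)) // IsBoolean w} :=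
  card_insertAt fun w => by
    have h := (insertAt (last n).castSucc (last (n + 1)) w).injective.ne
      (castSucc_lt_last (last n)).ne'
    rw [insertAt_apply_self] at h
    exact (and_iff_left h).trans
      (isBoolean_insertAt_last_right_iff fun _ => eq_last_of_castSucc_last_lt)

theorem card_isBoolean_apply_castSucc_last_ne_last :
    Nat.card {W : Perm (Fin (n + 2)) // (IsBoolean W ∧ W (last (n + 1)) ≠ last (n + 1)) ∧
      W (last n).castSucc ≠ last (n + 1)} =
      Nat.card {w : Perm (Fin (n + 1)) // IsBoolean w ∧ w (last n) ≠ last n} := by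
  have hcc_ne (w : Perm (Fin (n + 1))) :
      insertAt (last (n + 1)) (last n).castSucc w (last n).castSucc ≠ last (n + 1) ↔
        w (last n) ≠ last n := by
    have h := insertAt_apply_succAbove (last (n + 1)) (last n).castSucc w (last n)
    rw [succAbove_last_apply] at h
    rw [h, Ne, ← (succAbove_castSucc_self (last n)).trans (succ_last n), succAbove_right_inj]
  calc _ = Nat.card {W : Perm (Fin (n + 2)) //
        (IsBoolean W ∧ W (last n).castSucc ≠ last (n + 1)) ∧
          W (last (n + 1)) = (last n).castSucc} := Nat.card_congr <| subtypeEquivRight fun W =>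
        ⟨fun ⟨⟨hW, hlast⟩, hcc⟩ => ⟨⟨hW, hcc⟩, hW.apply_last_eq hlast hcc⟩,
          fun ⟨⟨hW, hcc⟩, hlast⟩ =>
            ⟨⟨hW, hlast ▸ (castSucc_lt_last _).ne⟩, hcc⟩⟩
    _ = _ := card_insertAt fun w =>
      (isBoolean_insertAt_last_left_iff fun _ => eq_last_of_castSucc_last_lt).and (hcc_ne w)

theorem card_isBoolean_apply_last_ne_succ :
    Nat.card {w : Perm (Fin (n + 2)) // IsBoolean w ∧ w (last (n + 1)) ≠ last (n + 1)} =
      Nat.card {w : Perm (Fin (n + 1)) // IsBoolean w} +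
        Nat.card {w : Perm (Fin (n + 1)) // IsBoolean w ∧ w (last n) ≠ last n} := by
  rw [card_subtype_eq_card_and_add_card_and_not _ fun w => w (last n).castSucc = last (n + 1),
    card_isBoolean_apply_castSucc_last_eq_last, ← card_isBoolean_apply_castSucc_last_ne_last]

end

theorem isBoolean_of_subsingleton {n : ℕ} [Subsingleton (Fin n)] (w : Perm (Fin n)) :
    IsBoolean w :=
  ⟨fun ⟨_, _, _, hij, _⟩ => hij.ne (Subsingleton.elim _ _),
    fun ⟨_, _, _, _, hij, _⟩ => hij.ne (Subsingleton.elim _ _)⟩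

theorem card_isBoolean_eq_fib (n : ℕ) :
    Nat.card {w : Perm (Fin (n + 1)) // IsBoolean w} = Nat.fib (2 * n + 1) ∧
      Nat.card {w : Perm (Fin (n + 1)) // IsBoolean w ∧ w (last n) ≠ last n} =
        Nat.fib (2 * n) := by
  induction n with
  | zero =>
    have hfix (w : Perm (Fin 1)) : w 0 = 0 := Subsingleton.elim _ _
    simp [isBoolean_of_subsingleton, hfix]
  | succ n ih =>
    rw [show 2 * (n + 1) + 1 = 2 * n + 1 + 2 by ring, show 2 * (n + 1) = 2 * n + 2 by ring,
      Nat.fib_add_two, Nat.fib_add_two, card_isBoolean_succ, card_isBoolean_apply_last_ne_succ,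
      ih.1, ih.2]
    constructor <;> ring

/-- The number of permutations in `S_n` avoiding both `321` and `3412` is the
Fibonacci number `F_{2n-1}`. -/
theorem card_boolean_permutations (n : ℕ) (hn : 1 ≤ n) :
    Nat.card {w : Equiv.Perm (Fin n) // ¬Contains321 w ∧ ¬Contains3412 w} =
      Nat.fib (2 * n - 1) := by
  obtain ⟨m, rfl⟩ := Nat.exists_eq_add_of_le' hn
  rw [show 2 * (m + 1) - 1 = 2 * m + 1 by omega]
  exact (card_isBoolean_eq_fib m).1
end

section
/- For all n ≥ 1, the sum over k from 1 to n-1 of F_{k+1}·F_{n-k+1} equals ((n+1)·F_{n+3} + (n-7)·F_{n+1})/5, where F_i denotes the i-th Fibonacci number with F_0 = 0, F_1 = 1. -/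
/-!
Write `S n = ∑_{i+j=n} F_{i+1} F_{j+1}`. The sum in the theorem is `S n` without its two end terms
`F_1 F_{n+1}`, so it suffices to show `5 S n = (n+1) F_{n+3} + (n+3) F_{n+1}`. Splitting
`F_{j+2} = F_{j+1} + F_j` in the last factor gives `S (n+2) = S (n+1) + S n + F_{n+3}`, and the
closed form satisfies the same recurrence.
-/

open Finset

def fibSuccConv (n : ℕ) : ℕ :=
  ∑ p ∈ antidiagonal n, Nat.fib (p.1 + 1) * Nat.fib (p.2 + 1)

theorem fibSuccConv_add_two (n : ℕ) :
    fibSuccConv (n + 2) = fibSuccConv (n + 1) + fibSuccConv n + Nat.fib (n + 3) := by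
  have tail : ∑ p ∈ antidiagonal (n + 1), Nat.fib (p.1 + 1) * Nat.fib p.2 = fibSuccConv n := by
    simp [Nat.sum_antidiagonal_succ', fibSuccConv]
  calc fibSuccConv (n + 2)
      = Nat.fib (n + 3) + ∑ p ∈ antidiagonal (n + 1), Nat.fib (p.1 + 1) * Nat.fib (p.2 + 2) := by
        simp [fibSuccConv, Nat.sum_antidiagonal_succ' (n := n + 1)]
    _ = fibSuccConv (n + 1) + fibSuccConv n + Nat.fib (n + 3) := by
        simp only [Nat.fib_add_two, mul_add, sum_add_distrib, tail, fibSuccConv]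
        ring

theorem five_mul_fibSuccConv (n : ℕ) :
    5 * fibSuccConv n = (n + 1) * Nat.fib (n + 3) + (n + 3) * Nat.fib (n + 1) := by
  induction n using Nat.twoStepInduction with
  | zero => rfl
  | one => rfl
  | more n ih₀ ih₁ =>
    rw [fibSuccConv_add_two]
    simp only [Nat.fib_add_two, add_assoc, Nat.reduceAdd] at *
    linear_combination ih₀ + ih₁

theorem fibSuccConv_eq_sum_Icc_add {n : ℕ} (hn : 1 ≤ n) :
    fibSuccConv n =
      ∑ k ∈ Icc 1 (n - 1), Nat.fib (k + 1) * Nat.fib (n - k + 1) + 2 * Nat.fib (n + 1) := by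
  obtain ⟨m, rfl⟩ := Nat.exists_eq_add_of_le' hn
  rw [fibSuccConv,
    Nat.sum_antidiagonal_eq_sum_range_succ (fun i j ↦ Nat.fib (i + 1) * Nat.fib (j + 1)),
    sum_range_eq_add_Ico _ (by omega), Nat.succ_eq_add_one, Ico_add_one_right_eq_Icc,
    sum_Icc_succ_top (by omega)]
  simp only [zero_add, Nat.fib_one, tsub_zero, one_mul, tsub_self, mul_one, add_tsub_cancel_right]
  ring

/-- For `n ≥ 1`, `∑_{k=1}^{n-1} F_{k+1} F_{n-k+1} = ((n+1) F_{n+3} + (n-7) F_{n+1}) / 5`. -/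
theorem fib_convolution_identity (n : ℕ) (hn : 1 ≤ n) :
    (∑ k ∈ Finset.Icc 1 (n - 1), (Nat.fib (k + 1) * Nat.fib (n - k + 1) : ℤ)) =
      (((n : ℤ) + 1) * Nat.fib (n + 3) + ((n : ℤ) - 7) * Nat.fib (n + 1)) / 5 := by
  have hsplit := fibSuccConv_eq_sum_Icc_add hn
  have hclosed := five_mul_fibSuccConv n
  zify at hsplit hclosed
  have hnum : ((n : ℤ) + 1) * Nat.fib (n + 3) + ((n : ℤ) - 7) * Nat.fib (n + 1) =
      5 * ∑ k ∈ Icc 1 (n - 1), (Nat.fib (k + 1) * Nat.fib (n - k + 1) : ℤ) := by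
    linear_combination 5 * hsplit - hclosed
  rw [hnum, Int.mul_ediv_cancel_left _ (by norm_num)]
end

section
/- For fixed k with 1 ≤ k ≤ n-1, the number of permutations w ∈ S_n such that σ_k ≤_wk w and σ_k·w is a product of pairwise commuting adjacent transpositions (equivalently, σ_k·w avoids 231, 312, and 321) equals F_{k+1}·F_{n-k+1}, where F_i is the i-th Fibonacci number with F_0 = 0, F_1 = 1. -/
/-- The adjacent transposition `σ_k = (k, k+1)` (1-indexed values `k`, `k+1`
corresponding to the 0-indexed elements `k-1`, `k` of `Fin n`). -/
def sigk (n k : ℕ) (h : k < n) : Equiv.Perm (Fin n) :=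
  Equiv.swap ⟨k - 1, by omega⟩ ⟨k, h⟩

/-- `σ_k ≤wk w` in the right weak order on `S_n`; equivalently,
`w⁻¹(k) > w⁻¹(k+1)` (1-indexed), i.e. 0-indexed `w⁻¹(k) < w⁻¹(k-1)`. -/
def WkAboveSigma (n k : ℕ) (h : k < n) (w : Equiv.Perm (Fin n)) : Prop :=
  w⁻¹ ⟨k, h⟩ < w⁻¹ ⟨k - 1, by omega⟩

/-!
Put `u = σ_k w`. A permutation avoids 231, 312 and 321 iff it moves every point by at most
one: if `u i ≥ i + 2`, two of the values below `u i` sit to the right of `i` and form a 312 or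
a 321 with it; apply this to `u⁻¹` for the other inequality. Such a `u` is an involution, the
product of the transpositions `(i, i+1)` over its ascent set `{i | u i = i + 1}`, and every set
without two consecutive elements arises. As `u⁻¹ = u`, `σ_k ≤ w` says `u (k-1) < u k`, i.e. `u`
does not swap `k - 1` and `k`; so the ascent set splits at `k - 1` into two independent ones.
Sparse subsets of `{0, …, m - 2}` are counted by `F_{m+1}`, according to whether they contain
`m - 2`.
-/

open Equiv Finset

section

variable {n : ℕ}

def NearId (u : Perm (Fin n)) : Prop :=
  ∀ i : Fin n, (u i : ℕ) ≤ i + 1 ∧ (i : ℕ) ≤ u i + 1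

lemma Contains312.inv {u : Perm (Fin n)} (h : Contains312 u) : Contains231 u⁻¹ := by
  obtain ⟨i, j, k, hij, hjk, h₁, h₂⟩ := h
  exact ⟨u j, u k, u i, h₁, h₂, by simpa using hij, by simpa using hjk⟩

lemma Contains321.inv {u : Perm (Fin n)} (h : Contains321 u) : Contains321 u⁻¹ := by
  obtain ⟨i, j, k, hij, hjk, h₁, h₂⟩ := h
  exact ⟨u k, u j, u i, h₁, h₂, by simpa using hij, by simpa using hjk⟩

lemma apply_le_succ_of_not_contains312_of_not_contains321 {u : Perm (Fin n)}
    (h312 : ¬Contains312 u) (h321 : ¬Contains321 u) (i : Fin n) : (u i : ℕ) ≤ i + 1 := by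
  by_contra! hi
  -- at least `u i - i ≥ 2` of the values below `u i` sit to the right of position `i`
  have hB : 1 < #((Iio (u i)).map u⁻¹.toEmbedding \ Iio i) := by
    have := le_card_sdiff (Iio i) ((Iio (u i)).map u⁻¹.toEmbedding)
    rw [card_map, Fin.card_Iio, Fin.card_Iio] at this
    omega
  set B := (Iio (u i)).map u⁻¹.toEmbedding \ Iio i
  have hmem : ∀ j ∈ B, i < j ∧ u j < u i := by
    intro j hj
    simp only [B, mem_sdiff, mem_map, mem_Iio, not_lt] at hj
    obtain ⟨⟨a, ha, rfl⟩, hij⟩ := hj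
    have hua : u (u⁻¹ a) = a := u.apply_symm_apply a
    refine ⟨lt_of_le_of_ne hij ?_, by simpa [hua] using ha⟩
    rintro rfl
    simp at ha
  have key : ∀ j ∈ B, ∀ j' ∈ B, ¬j < j' := by
    intro j hj j' hj' hlt
    rcases lt_or_gt_of_ne (u.injective.ne hlt.ne) with h | h
    · exact h312 ⟨i, j, j', (hmem j hj).1, hlt, h, (hmem j' hj').2⟩
    · exact h321 ⟨i, j, j', (hmem j hj).1, hlt, h, (hmem j hj).2⟩
  obtain ⟨j, hj, j', hj', hne⟩ := one_lt_card.1 hB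
  rcases lt_or_gt_of_ne hne with h | h
  exacts [key j hj j' hj' h, key j' hj' j hj h]

lemma nearId_iff_not_contains {u : Perm (Fin n)} :
    NearId u ↔ ¬Contains231 u ∧ ¬Contains312 u ∧ ¬Contains321 u := by
  constructor
  · intro h
    have key : ∀ i j k : Fin n, i < j → j < k → ¬u k < u i := fun i j k hij hjk hki => by
      have := (h i).1
      have := (h k).2
      rw [Fin.lt_def] at hij hjk hki
      omega
    refine ⟨?_, ?_, ?_⟩ <;> rintro ⟨i, j, k, hij, hjk, h₁, h₂⟩
    exacts [key i j k hij hjk h₁, key i j k hij hjk h₂, key i j k hij hjk (h₁.trans h₂)]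
  · rintro ⟨h231, h312, h321⟩ i
    refine ⟨apply_le_succ_of_not_contains312_of_not_contains321 h312 h321 i, ?_⟩
    simpa using apply_le_succ_of_not_contains312_of_not_contains321 (u := u⁻¹)
      (fun h => h231 (by simpa using h.inv)) (fun h => h321 (by simpa using h.inv)) (u i)

lemma NearId.apply_apply {u : Perm (Fin n)} (h : NearId u) (i : Fin n) : u (u i) = i := by
  induction i using WellFoundedLT.induction with
  | _ i ih =>
  rcases lt_trichotomy (u i) i with hlt | heq | hgt
  · exact u.injective (ih _ hlt)
  · rw [heq, heq]
  · -- the preimage of `i` cannot lie left of `i` (by `ih`), so it is `i + 1 = u i`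
    have huv : u (u⁻¹ i) = i := u.apply_symm_apply i
    have hiv : i < u⁻¹ i := by
      rcases lt_trichotomy (u⁻¹ i) i with hvi | hvi | hvi
      · have := ih _ hvi
        rw [huv] at this
        exact absurd (this ▸ hgt) (lt_asymm hvi)
      · rw [hvi] at huv
        exact absurd huv hgt.ne'
      · exact hvi
    have hui : u i = u⁻¹ i := by
      have hv := (h (u⁻¹ i)).2
      have hi := (h i).1
      rw [huv] at hv
      rw [Fin.lt_def] at hiv hgt
      ext
      omega
    rw [hui, huv]

lemma NearId.inv_eq {u : Perm (Fin n)} (h : NearId u) : u⁻¹ = u :=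
  Equiv.ext fun i => Perm.inv_eq_iff_eq.2 (h.apply_apply i).symm

lemma NearId.apply_lt_apply_iff {u : Perm (Fin n)} (h : NearId u) {i j : Fin n}
    (hij : (j : ℕ) = i + 1) : u i < u j ↔ u i ≠ j := by
  constructor
  · rintro hlt rfl
    rw [h.apply_apply, Fin.lt_def] at hlt
    omega
  · intro hne
    have hji : u j ≠ i := fun hji => hne (by rw [← hji, h.apply_apply])
    have := h i
    have := h j
    have := u.injective.ne (Fin.ne_of_val_ne (by omega : (i : ℕ) ≠ j))
    rw [Fin.lt_def]
    rw [Ne, Fin.ext_iff] at hne hji this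
    omega

def sparseSubsets (m : ℕ) : Finset (Finset ℕ) :=
  (range m).powerset.filter fun S => ∀ i ∈ S, i + 1 < m ∧ i + 1 ∉ S

lemma mem_sparseSubsets {m : ℕ} {S : Finset ℕ} :
    S ∈ sparseSubsets m ↔ ∀ i ∈ S, i + 1 < m ∧ i + 1 ∉ S := by
  simp only [sparseSubsets, mem_filter, mem_powerset, and_iff_right_iff_imp]
  exact fun h i hi => mem_range.2 (by have := (h i hi).1; omega)

def adjSwaps (S : Finset ℕ) (i : ℕ) : ℕ :=
  if i ∈ S then i + 1 else if 0 < i ∧ i - 1 ∈ S then i - 1 else i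

lemma adjSwaps_eq_succ_iff {S : Finset ℕ} {i : ℕ} : adjSwaps S i = i + 1 ↔ i ∈ S := by
  unfold adjSwaps
  split_ifs <;> simp_all

lemma adjSwaps_lt {m : ℕ} {S : Finset ℕ} (hS : S ∈ sparseSubsets m) {i : ℕ} (hi : i < m) :
    adjSwaps S i < m := by
  unfold adjSwaps
  split_ifs with h
  exacts [(mem_sparseSubsets.1 hS i h).1, by omega, hi]

lemma adjSwaps_adjSwaps {m : ℕ} {S : Finset ℕ} (hS : S ∈ sparseSubsets m) (i : ℕ) :
    adjSwaps S (adjSwaps S i) = i := by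
  by_cases hi : i ∈ S
  · simp [adjSwaps, hi, (mem_sparseSubsets.1 hS i hi).2]
  · by_cases hi' : 0 < i ∧ i - 1 ∈ S
    · simp [adjSwaps, hi, hi', Nat.sub_add_cancel hi'.1]
    · simp [adjSwaps, hi, hi']

def ascents (u : Perm (Fin n)) : Finset ℕ :=
  (univ.filter fun i : Fin n => (u i : ℕ) = i + 1).map Fin.valEmbedding

lemma mem_ascents {u : Perm (Fin n)} {j : ℕ} :
    j ∈ ascents u ↔ ∃ i : Fin n, (u i : ℕ) = i + 1 ∧ (i : ℕ) = j := by
  simp [ascents]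

lemma val_mem_ascents {u : Perm (Fin n)} {i : Fin n} :
    (i : ℕ) ∈ ascents u ↔ (u i : ℕ) = i + 1 := by
  simp [ascents, Fin.val_inj]

def adjSwapsPerm (S : Finset ℕ) (hS : S ∈ sparseSubsets n) : Perm (Fin n) :=
  Function.Involutive.toPerm (fun i => ⟨adjSwaps S i, adjSwaps_lt hS i.2⟩)
    fun i => Fin.ext (adjSwaps_adjSwaps hS i)

lemma val_adjSwapsPerm {S : Finset ℕ} (hS : S ∈ sparseSubsets n) (i : Fin n) :
    (adjSwapsPerm S hS i : ℕ) = adjSwaps S i := rfl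

lemma nearId_adjSwapsPerm {S : Finset ℕ} (hS : S ∈ sparseSubsets n) :
    NearId (adjSwapsPerm S hS) := fun i => by
  rw [val_adjSwapsPerm, adjSwaps]
  split_ifs <;> omega

lemma ascents_adjSwapsPerm {S : Finset ℕ} (hS : S ∈ sparseSubsets n) :
    ascents (adjSwapsPerm S hS) = S := by
  ext j
  simp only [mem_ascents, val_adjSwapsPerm, adjSwaps_eq_succ_iff]
  refine ⟨fun ⟨i, hi, hij⟩ => hij ▸ hi, fun hj => ⟨⟨j, ?_⟩, hj, rfl⟩⟩
  have := (mem_sparseSubsets.1 hS j hj).1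
  omega

lemma NearId.ascents_mem_sparseSubsets {u : Perm (Fin n)} (h : NearId u) :
    ascents u ∈ sparseSubsets n := by
  refine mem_sparseSubsets.2 fun j hj => ?_
  obtain ⟨i, hi, rfl⟩ := mem_ascents.1 hj
  refine ⟨by omega, fun hsucc => ?_⟩
  obtain ⟨i', hi', hii'⟩ := mem_ascents.1 hsucc
  have : i' = u i := Fin.ext (by omega)
  rw [this, h.apply_apply] at hi'
  omega

lemma NearId.adjSwapsPerm_ascents {u : Perm (Fin n)} (h : NearId u) :
    adjSwapsPerm (ascents u) h.ascents_mem_sparseSubsets = u := by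
  ext i
  have hdesc : 0 < (i : ℕ) ∧ (i : ℕ) - 1 ∈ ascents u ↔ (u i : ℕ) + 1 = i := by
    constructor
    · rintro ⟨hpos, hpred⟩
      obtain ⟨a, ha, hai⟩ := mem_ascents.1 hpred
      have : u a = i := Fin.ext (by omega)
      rw [← this, h.apply_apply]
      omega
    · intro hdesc
      refine ⟨by omega, ?_⟩
      rw [← hdesc, Nat.add_sub_cancel, val_mem_ascents, h.apply_apply, hdesc]
  have hi := h i
  simp only [val_adjSwapsPerm, adjSwaps, val_mem_ascents, hdesc]
  split_ifs <;> omega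

lemma weakAbove_and_not_contains_iff {k : ℕ} (hk1 : 1 ≤ k) (hk : k < n) (w : Perm (Fin n)) :
    (WkAboveSigma n k hk w ∧ ¬Contains231 (sigk n k hk * w) ∧ ¬Contains312 (sigk n k hk * w) ∧
      ¬Contains321 (sigk n k hk * w)) ↔
    NearId (sigk n k hk * w) ∧ k - 1 ∉ ascents (sigk n k hk * w) := by
  set u := sigk n k hk * w
  have hw : WkAboveSigma n k hk w ↔ u⁻¹ ⟨k - 1, by omega⟩ < u⁻¹ ⟨k, hk⟩ := by
    simp [WkAboveSigma, u, sigk, mul_inv_rev, swap_apply_left]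
  rw [← nearId_iff_not_contains, hw, and_comm]
  refine and_congr_right fun h => ?_
  have hmem := val_mem_ascents (u := u) (i := ⟨k - 1, by omega⟩)
  rw [h.inv_eq, h.apply_lt_apply_iff (by simp; omega), Ne, Fin.ext_iff, hmem, Fin.val_mk,
    Fin.val_mk, Nat.sub_add_cancel hk1]

lemma card_nearId_ascents (P : Finset ℕ → Prop) [DecidablePred P] :
    Nat.card {u : Perm (Fin n) // NearId u ∧ P (ascents u)} = #((sparseSubsets n).filter P) := by
  classical
  rw [Nat.card_eq_fintype_card, Fintype.card_subtype]
  refine card_bij' (fun u _ => ascents u) (fun S hS => adjSwapsPerm S (mem_filter.1 hS).1)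
    ?_ ?_ ?_ ?_
  · intro u hu
    obtain ⟨h, hP⟩ := (mem_filter.1 hu).2
    exact mem_filter.2 ⟨h.ascents_mem_sparseSubsets, hP⟩
  · intro S hS
    refine mem_filter.2 ⟨mem_univ _, nearId_adjSwapsPerm _, ?_⟩
    rw [ascents_adjSwapsPerm]
    exact (mem_filter.1 hS).2
  · intro u hu
    exact (mem_filter.1 hu).2.1.adjSwapsPerm_ascents
  · intro S hS
    exact ascents_adjSwapsPerm _

lemma filter_lt_mem_sparseSubsets {k : ℕ} {S : Finset ℕ} (hS : S ∈ sparseSubsets n)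
    (hk : k - 1 ∉ S) : S.filter (· < k) ∈ sparseSubsets k := by
  refine mem_sparseSubsets.2 fun i hi => ?_
  rw [mem_filter] at hi ⊢
  have : i ≠ k - 1 := fun h => hk (h ▸ hi.1)
  exact ⟨by omega, fun h => (mem_sparseSubsets.1 hS i hi.1).2 h.1⟩

lemma preimage_add_mem_sparseSubsets (k : ℕ) {S : Finset ℕ} (hS : S ∈ sparseSubsets n) :
    S.preimage (· + k) (add_left_injective k).injOn ∈ sparseSubsets (n - k) := by
  refine mem_sparseSubsets.2 fun i hi => ?_
  rw [mem_preimage] at hi ⊢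
  obtain ⟨hlt, hnot⟩ := mem_sparseSubsets.1 hS _ hi
  rw [add_right_comm]
  exact ⟨by omega, hnot⟩

lemma union_map_add_mem_sparseSubsets {k : ℕ} (hkn : k ≤ n) {A B : Finset ℕ}
    (hA : A ∈ sparseSubsets k) (hB : B ∈ sparseSubsets (n - k)) :
    A ∪ B.map (addRightEmbedding k) ∈ sparseSubsets n := by
  rw [mem_sparseSubsets] at hA hB ⊢
  simp only [mem_union, mem_map, addRightEmbedding_apply]
  rintro i (hi | ⟨a, ha, rfl⟩)
  · obtain ⟨hlt, hnot⟩ := hA i hi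
    refine ⟨by omega, ?_⟩
    rintro (h | ⟨b, -, hb⟩)
    exacts [hnot h, by omega]
  · obtain ⟨hlt, hnot⟩ := hB a ha
    refine ⟨by omega, ?_⟩
    rintro (h | ⟨b, hb, hba⟩)
    · have := (hA _ h).1
      omega
    · obtain rfl : b = a + 1 := by omega
      exact hnot hb

lemma card_sparseSubsets_filter_not_mem {k : ℕ} (hk1 : 1 ≤ k) (hkn : k ≤ n) :
    #((sparseSubsets n).filter (k - 1 ∉ ·)) = #(sparseSubsets k) * #(sparseSubsets (n - k)) := by
  rw [← card_product]
  refine card_nbij' (fun S => (S.filter (· < k), S.preimage (· + k) (add_left_injective k).injOn))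
    (fun p => p.1 ∪ p.2.map (addRightEmbedding k)) ?_ ?_ ?_ ?_
  · intro S hS
    obtain ⟨hS, hk⟩ := mem_filter.1 hS
    exact mem_product.2 ⟨filter_lt_mem_sparseSubsets hS hk, preimage_add_mem_sparseSubsets k hS⟩
  · rintro ⟨A, B⟩ hp
    obtain ⟨hA, hB⟩ := mem_product.1 hp
    refine mem_filter.2 ⟨union_map_add_mem_sparseSubsets hkn hA hB, ?_⟩
    simp only [mem_union, mem_map, addRightEmbedding_apply, not_or, not_exists, not_and]
    exact ⟨fun h => by have := (mem_sparseSubsets.1 hA _ h).1; omega, fun a _ => by omega⟩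
  · intro S _
    ext i
    simp only [mem_union, mem_filter, mem_map, mem_preimage, addRightEmbedding_apply]
    refine ⟨by rintro (⟨hi, -⟩ | ⟨a, ha, rfl⟩) <;> assumption, fun hi => ?_⟩
    by_cases hik : i < k
    · exact Or.inl ⟨hi, hik⟩
    · exact Or.inr ⟨i - k, by rwa [Nat.sub_add_cancel (by omega)], by omega⟩
  · rintro ⟨A, B⟩ hp
    obtain ⟨hA, -⟩ := mem_product.1 hp
    refine Prod.ext (ext fun i => ?_) (ext fun i => ?_) <;>
      simp only [mem_union, mem_filter, mem_map, mem_preimage, addRightEmbedding_apply]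
    · refine ⟨?_, fun hi => ⟨Or.inl hi, by have := (mem_sparseSubsets.1 hA i hi).1; omega⟩⟩
      rintro ⟨hi | ⟨a, -, rfl⟩, hik⟩
      exacts [hi, by omega]
    · refine ⟨?_, fun hi => Or.inr ⟨i, hi, rfl⟩⟩
      rintro (hi | ⟨a, ha, hai⟩)
      · have := (mem_sparseSubsets.1 hA _ hi).1
        omega
      · rwa [← add_right_cancel hai]

lemma card_sparseSubsets_add_two_filter_mem (m : ℕ) :
    #((sparseSubsets (m + 2)).filter (m ∈ ·)) = #(sparseSubsets m) := by
  refine card_nbij' (·.erase m) (insert m ·) ?_ ?_ ?_ ?_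
  · intro S hS
    obtain ⟨hS, hm⟩ := mem_filter.1 hS
    refine mem_sparseSubsets.2 fun i hi => ?_
    rw [mem_erase] at hi
    obtain ⟨hi1, hi2⟩ := mem_sparseSubsets.1 hS i hi.2
    refine ⟨?_, fun h => hi2 (mem_erase.1 h).2⟩
    by_contra
    obtain rfl : i + 1 = m := by omega
    exact hi2 hm
  · intro S hS
    rw [mem_coe, mem_sparseSubsets] at hS
    refine mem_filter.2 ⟨mem_sparseSubsets.2 fun i hi => ?_, mem_insert_self m S⟩
    rw [mem_insert] at hi ⊢
    rcases hi with rfl | hi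
    · refine ⟨by omega, ?_⟩
      rintro (h | h)
      exacts [by omega, by have := (hS _ h).1; omega]
    · obtain ⟨hi1, hi2⟩ := hS i hi
      refine ⟨by omega, ?_⟩
      rintro (h | h)
      exacts [by omega, hi2 h]
  · intro S hS
    exact insert_erase (mem_filter.1 hS).2
  · intro S hS
    exact erase_insert fun hm => by have := (mem_sparseSubsets.1 hS m hm).1; omega

lemma card_sparseSubsets (m : ℕ) : #(sparseSubsets m) = Nat.fib (m + 1) := by
  induction m using Nat.strong_induction_on with
  | _ m ih =>
  match m with
  | 0 => rfl
  | 1 => rfl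
  | m + 2 =>
    have hnot := card_sparseSubsets_filter_not_mem (n := m + 2) (k := m + 1) (by omega) (by omega)
    rw [Nat.add_sub_cancel, show m + 2 - (m + 1) = 1 by omega, show #(sparseSubsets 1) = 1 from rfl,
      mul_one] at hnot
    rw [← card_filter_add_card_filter_not (s := sparseSubsets (m + 2)) (m ∈ ·),
      card_sparseSubsets_add_two_filter_mem, hnot, ih m (by omega), ih (m + 1) (by omega)]
    exact Nat.fib_add_two.symm

end

/-- For fixed `1 ≤ k ≤ n-1`, the number of `w ∈ S_n` with `σ_k ≤wk w` such that
`σ_k w` is a product of pairwise commuting adjacent transpositions (equivalently,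
avoids `231`, `312` and `321`) is `F_{k+1} F_{n-k+1}`. -/
theorem card_boolean_weak_intervals_over_sigma_k (n k : ℕ) (hk1 : 1 ≤ k) (hk2 : k ≤ n - 1) :
    Nat.card {w : Equiv.Perm (Fin n) // WkAboveSigma n k (by omega) w ∧
      ¬Contains231 (sigk n k (by omega) * w) ∧
      ¬Contains312 (sigk n k (by omega) * w) ∧
      ¬Contains321 (sigk n k (by omega) * w)} =
    Nat.fib (k + 1) * Nat.fib (n - k + 1) := by
  have hk : k < n := by omega
  rw [Nat.card_congr ((Equiv.mulLeft (sigk n k hk)).subtypeEquiv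
      (q := fun u => NearId u ∧ k - 1 ∉ ascents u) (weakAbove_and_not_contains_iff hk1 hk)),
    card_nearId_ascents (k - 1 ∉ ·),
    card_sparseSubsets_filter_not_mem hk1 hk.le, card_sparseSubsets, card_sparseSubsets]
end

section
/- The set of 321-avoiding permutations v ∈ S_n with σ_1 ≰_wk v (i.e., v⁻¹(1) < v⁻¹(2)) such that σ_1·v is also 321-avoiding is exactly the set of 321-avoiding permutations of {2,...,n} fixing 1, and hence has cardinality C_{n-1}. -/
namespace Av321

open Finset List DyckStep

/-! ### Generic counting for `ℕ → DyckStep` words -/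

/-- number of `c`s among the first `m` letters of `s`. -/
def cnt (s : ℕ → DyckStep) (c : DyckStep) (m : ℕ) : ℕ :=
  ((Finset.range m).filter (fun j => s j = c)).card

lemma cnt_succ (s : ℕ → DyckStep) (c : DyckStep) (m : ℕ) :
    cnt s c (m + 1) = cnt s c m + if s m = c then 1 else 0 := by
  unfold cnt
  rw [Finset.range_add_one, Finset.filter_insert]
  split
  · rw [Finset.card_insert_of_notMem (by simp)]
  · simp

/-- first-coordinate indicator count. -/
def As (s : ℕ → DyckStep) (m : ℕ) : ℕ :=
  ((Finset.range m).filter (fun j => s (2 * j) = U)).card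

/-- second-coordinate indicator count. -/
def Bs (s : ℕ → DyckStep) (m : ℕ) : ℕ :=
  ((Finset.range m).filter (fun j => s (2 * j + 1) = D)).card

lemma As_succ (s : ℕ → DyckStep) (m : ℕ) :
    As s (m + 1) = As s m + if s (2 * m) = U then 1 else 0 := by
  unfold As
  rw [Finset.range_add_one, Finset.filter_insert]
  split
  · rw [Finset.card_insert_of_notMem (by simp)]
  · simp

lemma Bs_succ (s : ℕ → DyckStep) (m : ℕ) :
    Bs s (m + 1) = Bs s m + if s (2 * m + 1) = D then 1 else 0 := by
  unfold Bs
  rw [Finset.range_add_one, Finset.filter_insert]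
  split
  · rw [Finset.card_insert_of_notMem (by simp)]
  · simp

lemma As_le (s : ℕ → DyckStep) (m : ℕ) : As s m ≤ m := by
  classical
  exact le_trans (Finset.card_filter_le _ _) (by simp)

lemma Bs_le (s : ℕ → DyckStep) (m : ℕ) : Bs s m ≤ m := by
  exact le_trans (Finset.card_filter_le _ _) (by simp)

lemma cntU_two_mul (s : ℕ → DyckStep) (m : ℕ) :
    cnt s U (2 * m) + Bs s m = As s m + m := by
  induction m with
  | zero => simp [cnt, As, Bs]
  | succ m ih =>
    have h2 : 2 * (m + 1) = (2 * m + 1) + 1 := by ring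
    rw [h2, cnt_succ, cnt_succ, As_succ, Bs_succ]
    rcases (s (2*m)).dichotomy with h | h <;> rcases (s (2*m+1)).dichotomy with h' | h' <;>
      simp [h, h'] <;> omega

lemma cntD_two_mul (s : ℕ → DyckStep) (m : ℕ) :
    cnt s D (2 * m) + As s m = Bs s m + m := by
  induction m with
  | zero => simp [cnt, As, Bs]
  | succ m ih =>
    have h2 : 2 * (m + 1) = (2 * m + 1) + 1 := by ring
    rw [h2, cnt_succ, cnt_succ, As_succ, Bs_succ]
    rcases (s (2*m)).dichotomy with h | h <;> rcases (s (2*m+1)).dichotomy with h' | h' <;>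
      simp [h, h'] <;> omega

/-- counts of a prefix of the `ofFn` word. -/
lemma count_take_ofFn (N : ℕ) (s : ℕ → DyckStep) (c : DyckStep) (i : ℕ) (hi : i ≤ N) :
    (((List.ofFn (fun k : Fin N => s k)).take i).count c) = cnt s c i := by
  induction i with
  | zero => simp [cnt]
  | succ i ih =>
    have hi' : i ≤ N := by omega
    rw [List.take_succ, List.count_append, ih hi', cnt_succ]
    have : (List.ofFn (fun k : Fin N => s k))[i]? = some (s i) := by
      rw [List.getElem?_ofFn]
      simp [List.ofFnNthVal, Nat.lt_of_lt_of_le (by omega : i < i + 1) hi]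
    rw [this]
    rcases (s i).dichotomy with h | h <;> rcases c.dichotomy with h' | h' <;>
      rw [h, h'] <;> simp [List.count_singleton]

lemma count_ofFn (N : ℕ) (s : ℕ → DyckStep) (c : DyckStep) :
    (List.ofFn (fun k : Fin N => s k)).count c = cnt s c N := by
  have := count_take_ofFn N s c N le_rfl
  rwa [List.take_of_length_le (by simp)] at this

/-- Conversion between `range`-filters and `Fin`-filters. -/
lemma card_filter_range_eq (n : ℕ) (P : ℕ → Prop) [DecidablePred P] :
    ((Finset.range n).filter P).card = (Finset.univ.filter (fun i : Fin n => P i.val)).card := by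
  rw [show (Finset.range n).filter P
      = (Finset.univ.filter (fun i : Fin n => P i.val)).image Fin.val by
    ext a
    simp only [Finset.mem_filter, Finset.mem_range, Finset.mem_image, Finset.mem_univ, true_and]
    constructor
    · rintro ⟨h1, h2⟩; exact ⟨⟨a, h1⟩, h2, rfl⟩
    · rintro ⟨i, hP, rfl⟩; exact ⟨i.isLt, hP⟩]
  exact Finset.card_image_of_injective _ Fin.val_injective

end Av321

/-! ### Permutation to word -/

namespace Perm321

open Equiv

variable {n : ℕ}

/-- weak excedance at position `i`. -/
def ExcAt (w : Perm (Fin n)) (i : Fin n) : Prop := (i : ℕ) ≤ (w i : ℕ)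

instance (w : Perm (Fin n)) (i : Fin n) : Decidable (ExcAt w i) :=
  inferInstanceAs (Decidable (_ ≤ _))

lemma not321_mono_exc {w : Perm (Fin n)} (hw : ¬Contains321 w) {i j : Fin n}
    (hij : i < j) (hi : ExcAt w i) (hj : ExcAt w j) : w i < w j := by
  by_contra hlt
  have hji : w j < w i :=
    lt_of_le_of_ne (not_lt.mp hlt) (fun h => (ne_of_lt hij) (w.injective h.symm))
  have key : ∃ k, j < k ∧ w k < w j := by
    by_contra hk
    push_neg at hk
    have himg : (Finset.Iio (w j)).image w.symm ⊆ ((Finset.Iic j).erase j).erase i := by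
      intro p hp
      simp only [Finset.mem_image, Finset.mem_Iio] at hp
      obtain ⟨v, hv, rfl⟩ := hp
      have hwp : w (w.symm v) = v := w.apply_symm_apply v
      rw [Finset.mem_erase, Finset.mem_erase, Finset.mem_Iic]
      refine ⟨?_, ?_, ?_⟩
      · intro h; rw [h] at hwp; rw [← hwp] at hv
        exact absurd hv (not_lt.mpr hji.le)
      · intro h; rw [h] at hwp; rw [← hwp] at hv; exact absurd hv (lt_irrefl _)
      · by_contra h
        exact absurd ((hwp ▸ hk _ (not_le.mp h)).trans_lt hv) (lt_irrefl _)
    have hc := Finset.card_le_card himg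
    have hmemi : i ∈ (Finset.Iic j).erase j := by
      rw [Finset.mem_erase, Finset.mem_Iic]; exact ⟨ne_of_lt hij, le_of_lt hij⟩
    rw [Finset.card_image_of_injective _ w.symm.injective, Fin.card_Iio,
      Finset.card_erase_of_mem hmemi, Finset.card_erase_of_mem (by simp),
      Fin.card_Iic] at hc
    have h1 : (j : ℕ) ≤ (w j : ℕ) := hj
    have h2 : (i : ℕ) < (j : ℕ) := hij
    omega
  obtain ⟨k, hjk, hk⟩ := key
  exact hw ⟨i, j, k, hij, hjk, hk, hji⟩

lemma not321_mono_def {w : Perm (Fin n)} (hw : ¬Contains321 w) {i j : Fin n}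
    (hij : i < j) (hi : ¬ExcAt w i) (hj : ¬ExcAt w j) : w i < w j := by
  by_contra hlt
  have hji : w j < w i :=
    lt_of_le_of_ne (not_lt.mp hlt) (fun h => (ne_of_lt hij) (w.injective h.symm))
  have key : ∃ k, k < i ∧ w i < w k := by
    by_contra hk
    push_neg at hk
    have himg : (Finset.Ioi (w i)).image w.symm ⊆ ((Finset.Ici i).erase i).erase j := by
      intro p hp
      simp only [Finset.mem_image, Finset.mem_Ioi] at hp
      obtain ⟨v, hv, rfl⟩ := hp
      have hwp : w (w.symm v) = v := w.apply_symm_apply v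
      rw [Finset.mem_erase, Finset.mem_erase, Finset.mem_Ici]
      refine ⟨?_, ?_, ?_⟩
      · intro h; rw [h] at hwp; rw [← hwp] at hv
        exact absurd (hji.trans hv) (lt_irrefl _)
      · intro h; rw [h] at hwp; rw [← hwp] at hv; exact absurd hv (lt_irrefl _)
      · by_contra h
        exact absurd hv (not_lt.mpr (hwp ▸ hk _ (not_le.mp h)))
    have hc := Finset.card_le_card himg
    have hmemj : j ∈ (Finset.Ici i).erase i := by
      rw [Finset.mem_erase, Finset.mem_Ici]
      exact ⟨(ne_of_lt hij).symm, le_of_lt hij⟩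
    rw [Finset.card_image_of_injective _ w.symm.injective, Fin.card_Ioi,
      Finset.card_erase_of_mem hmemj, Finset.card_erase_of_mem (by simp),
      Fin.card_Ici] at hc
    have h1 : (w i : ℕ) < (i : ℕ) := not_le.mp hi
    have h2 : (i : ℕ) < (j : ℕ) := hij
    have h3 : (i : ℕ) < n := i.isLt
    omega
  obtain ⟨k, hki, hk⟩ := key
  exact hw ⟨k, i, j, hki, hij, hji, hk⟩

lemma mono_not321 {w : Perm (Fin n)}
    (hE : ∀ i j : Fin n, i < j → ExcAt w i → ExcAt w j → w i < w j)
    (hD : ∀ i j : Fin n, i < j → ¬ExcAt w i → ¬ExcAt w j → w i < w j) :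
    ¬Contains321 w := by
  rintro ⟨i, j, k, hij, hjk, h1, h2⟩
  by_cases ei : ExcAt w i <;> by_cases ej : ExcAt w j <;> by_cases ek : ExcAt w k
  · exact absurd (hE i j hij ei ej) (not_lt.mpr (le_of_lt h2))
  · exact absurd (hE i j hij ei ej) (not_lt.mpr (le_of_lt h2))
  · exact absurd (hE i k (hij.trans hjk) ei ek) (not_lt.mpr (le_of_lt (h1.trans h2)))
  · exact absurd (hD j k hjk ej ek) (not_lt.mpr (le_of_lt h1))
  · exact absurd (hE j k hjk ej ek) (not_lt.mpr (le_of_lt h1))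
  · exact absurd (hD i k (hij.trans hjk) ei ek) (not_lt.mpr (le_of_lt (h1.trans h2)))
  · exact absurd (hD i j hij ei ej) (not_lt.mpr (le_of_lt h2))
  · exact absurd (hD i j hij ei ej) (not_lt.mpr (le_of_lt h2))

end Perm321

namespace Av321

open DyckStep

lemma cnt_add (s : ℕ → DyckStep) (m : ℕ) : cnt s U m + cnt s D m = m := by
  induction m with
  | zero => simp [cnt]
  | succ m ih =>
    rw [cnt_succ, cnt_succ]
    rcases (s m).dichotomy with h | h
    · rw [h, if_pos rfl, if_neg (by simp)]; omega
    · rw [h, if_neg (by simp), if_pos rfl]; omega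

namespace Perm321

open Equiv Finset List DyckStep

variable {n : ℕ}

def ebB (w : Perm (Fin n)) (j : ℕ) : Bool :=
  if h : j < n then decide ((j : ℕ) ≤ (w ⟨j, h⟩ : ℕ)) else false

def fbB (w : Perm (Fin n)) (j : ℕ) : Bool :=
  if h : j < n then decide (((w.symm ⟨j, h⟩ : Fin n) : ℕ) ≤ j) else false

def stepf (w : Perm (Fin n)) (i : ℕ) : DyckStep :=
  if i % 2 = 0 then (if ebB w (i / 2) then U else D)
  else (if fbB w (i / 2) then D else U)

lemma ebB_iff {w : Perm (Fin n)} {j : ℕ} (h : j < n) :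
    ebB w j = true ↔ (j : ℕ) ≤ (w ⟨j, h⟩ : ℕ) := by
  unfold ebB; rw [dif_pos h]; simp

lemma fbB_iff {w : Perm (Fin n)} {j : ℕ} (h : j < n) :
    fbB w j = true ↔ ((w.symm ⟨j, h⟩ : Fin n) : ℕ) ≤ j := by
  unfold fbB; rw [dif_pos h]; simp

lemma stepf_even (w : Perm (Fin n)) (j : ℕ) :
    stepf w (2 * j) = if ebB w j then U else D := by
  unfold stepf
  have h1 : (2 * j) % 2 = 0 := by omega
  have h2 : (2 * j) / 2 = j := by omega
  rw [h1, h2]; simp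

lemma stepf_odd (w : Perm (Fin n)) (j : ℕ) :
    stepf w (2 * j + 1) = if fbB w j then D else U := by
  unfold stepf
  have h1 : (2 * j + 1) % 2 = 1 := by omega
  have h2 : (2 * j + 1) / 2 = j := by omega
  rw [h1, h2]; simp

lemma stepf_even_eq_U {w : Perm (Fin n)} {j : ℕ} :
    (stepf w (2 * j) = U) ↔ ebB w j = true := by
  rw [stepf_even]; cases hb : ebB w j <;> simp

lemma stepf_odd_eq_D {w : Perm (Fin n)} {j : ℕ} :
    (stepf w (2 * j + 1) = D) ↔ fbB w j = true := by
  rw [stepf_odd]; cases hb : fbB w j <;> simp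

/-- `A`-count for a permutation. -/
def Aw (w : Perm (Fin n)) (m : ℕ) : ℕ :=
  ((Finset.range m).filter (fun j => ebB w j = true)).card

def Bw (w : Perm (Fin n)) (m : ℕ) : ℕ :=
  ((Finset.range m).filter (fun j => fbB w j = true)).card

lemma As_stepf (w : Perm (Fin n)) (m : ℕ) : As (stepf w) m = Aw w m := by
  unfold As Aw
  congr 1
  exact Finset.filter_congr (fun j _ => by simp [stepf_even_eq_U])

lemma Bs_stepf (w : Perm (Fin n)) (m : ℕ) : Bs (stepf w) m = Bw w m := by
  unfold Bs Bw
  congr 1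
  exact Finset.filter_congr (fun j _ => by simp [stepf_odd_eq_D])

lemma balance (w : Perm (Fin n)) : Aw w n = Bw w n := by
  unfold Aw Bw
  apply Finset.card_bij
    (i := fun j hj => ((w ⟨j, Finset.mem_range.mp (Finset.mem_filter.mp hj).1⟩ : Fin n) : ℕ))
  · intro a ha
    obtain ⟨har, heb⟩ := Finset.mem_filter.mp ha
    have han := Finset.mem_range.mp har
    rw [Finset.mem_filter, Finset.mem_range]
    refine ⟨(w _).isLt, ?_⟩
    rw [fbB_iff (w _).isLt]
    simp only [Fin.eta, Equiv.symm_apply_apply]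
    exact (ebB_iff han).mp heb
  · intro a1 ha1 a2 ha2 h
    have := w.injective (Fin.ext h)
    exact congrArg Fin.val this
  · intro v hv
    obtain ⟨hvr, hfb⟩ := Finset.mem_filter.mp hv
    have hvn := Finset.mem_range.mp hvr
    have hle := (fbB_iff hvn).mp hfb
    refine ⟨((w.symm ⟨v, hvn⟩ : Fin n) : ℕ), ?_, ?_⟩
    · rw [Finset.mem_filter, Finset.mem_range]
      refine ⟨lt_of_le_of_lt hle hvn, ?_⟩
      rw [ebB_iff (lt_of_le_of_lt hle hvn)]
      simp only [Fin.eta, Equiv.apply_symm_apply]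
      exact hle
    · simp only [Fin.eta, Equiv.apply_symm_apply]

lemma exists_big (w : Perm (Fin n)) (m : ℕ) (hm : m < n) :
    ∃ j : Fin n, (j : ℕ) ≤ m ∧ m ≤ ((w j : Fin n) : ℕ) := by
  by_contra h
  push_neg at h
  have himg : (Finset.Iic (⟨m, hm⟩ : Fin n)).image w ⊆ Finset.Iio (⟨m, hm⟩ : Fin n) := by
    intro v hv
    obtain ⟨j, hj, rfl⟩ := Finset.mem_image.mp hv
    rw [Finset.mem_Iic] at hj
    rw [Finset.mem_Iio, Fin.lt_def]
    exact h j hj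
  have hc := Finset.card_le_card himg
  rw [Finset.card_image_of_injective _ w.injective, Fin.card_Iic, Fin.card_Iio] at hc
  simp at hc

lemma strictAB (w : Perm (Fin n)) (m : ℕ) (hm : m < n) : Bw w m < Aw w (m + 1) := by
  obtain ⟨j0, hj0m, hj0w⟩ := exists_big w m hm
  set T := (Finset.range (m + 1)).filter (fun j => ebB w j = true) with hT
  have hj0T : (j0 : ℕ) ∈ T := by
    rw [hT, Finset.mem_filter, Finset.mem_range]
    refine ⟨by omega, ?_⟩
    rw [ebB_iff j0.isLt]
    simp only [Fin.eta]
    omega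
  have hmaps : ∀ v ∈ (Finset.range m).filter (fun j => fbB w j = true),
      (fun v => if h : v < n then ((w.symm ⟨v, h⟩ : Fin n) : ℕ) else v) v ∈ T.erase (j0 : ℕ) := by
    intro v hv
    obtain ⟨hvr, hfb⟩ := Finset.mem_filter.mp hv
    have hvm := Finset.mem_range.mp hvr
    have hvn : v < n := by omega
    have hle := (fbB_iff hvn).mp hfb
    simp only [dif_pos hvn]
    rw [Finset.mem_erase, hT, Finset.mem_filter, Finset.mem_range]
    refine ⟨?_, by omega, ?_⟩
    · intro heq
      have : w ⟨(((w.symm ⟨v, hvn⟩ : Fin n)) : ℕ), (w.symm ⟨v, hvn⟩).isLt⟩ = w j0 := by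
        congr 1
        exact Fin.ext heq
      rw [Fin.eta, Equiv.apply_symm_apply] at this
      have : v = ((w j0 : Fin n) : ℕ) := congrArg Fin.val this
      omega
    · rw [ebB_iff (lt_of_le_of_lt (hle.trans (le_of_lt hvm)) hm)]
      simp only [Fin.eta, Equiv.apply_symm_apply]
      exact hle
  have hinj : Set.InjOn (fun v => if h : v < n then ((w.symm ⟨v, h⟩ : Fin n) : ℕ) else v)
      ((Finset.range m).filter (fun j => fbB w j = true)) := by
    intro a ha b hb hab
    have han : a < n := by
      have := Finset.mem_range.mp (Finset.mem_filter.mp ha).1; omega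
    have hbn : b < n := by
      have := Finset.mem_range.mp (Finset.mem_filter.mp hb).1; omega
    simp only [dif_pos han, dif_pos hbn] at hab
    exact congrArg Fin.val (w.symm.injective (Fin.ext hab) : (⟨a, han⟩ : Fin n) = ⟨b, hbn⟩)
  have hle := Finset.card_le_card_of_injOn _ hmaps hinj
  rw [Finset.card_erase_of_mem hj0T] at hle
  have hTpos : 0 < T.card := Finset.card_pos.mpr ⟨_, hj0T⟩
  unfold Bw Aw
  rw [← hT]
  omega

lemma weakAB (w : Perm (Fin n)) (m : ℕ) (hm : m ≤ n) : Bw w m ≤ Aw w m := by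
  cases m with
  | zero => simp [Bw, Aw]
  | succ m =>
    have hs := strictAB w m (by omega)
    have hB : Bw w (m + 1) ≤ Bw w m + 1 := by
      unfold Bw
      rw [Finset.range_add_one, Finset.filter_insert]
      split
      · exact (Finset.card_insert_le _ _).trans (by omega)
      · omega
    omega

end Perm321
end Av321

namespace Av321
namespace Perm321

open Equiv Finset List DyckStep

variable {n : ℕ}

lemma Aw_succ (w : Perm (Fin n)) (m : ℕ) :
    Aw w (m + 1) = Aw w m + if stepf w (2 * m) = U then 1 else 0 := by
  rw [← As_stepf, ← As_stepf, As_succ]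

/-- The Dyck word associated to a permutation. -/
def toWord (w : Perm (Fin n)) : DyckWord where
  toList := List.ofFn (fun i : Fin (2 * n) => stepf w i)
  count_U_eq_count_D := by
    rw [count_ofFn, count_ofFn]
    have hU := cntU_two_mul (stepf w) n
    have hD := cntD_two_mul (stepf w) n
    rw [As_stepf, Bs_stepf] at hU hD
    have hb := balance w
    omega
  count_D_le_count_U := by
    intro i
    by_cases h2n : 2 * n ≤ i
    · rw [List.take_of_length_le (by rw [List.length_ofFn]; omega)]
      rw [count_ofFn, count_ofFn]
      have hU := cntU_two_mul (stepf w) n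
      have hD := cntD_two_mul (stepf w) n
      rw [As_stepf, Bs_stepf] at hU hD
      have hb := balance w
      omega
    · push_neg at h2n
      rcases Nat.even_or_odd i with ⟨m, hm⟩ | ⟨m, hm⟩
      · have hi : i = 2 * m := by omega
        subst hi
        rw [count_take_ofFn _ _ _ _ (by omega), count_take_ofFn _ _ _ _ (by omega)]
        have hU := cntU_two_mul (stepf w) m
        have hD := cntD_two_mul (stepf w) m
        rw [As_stepf, Bs_stepf] at hU hD
        have hw := weakAB w m (by omega)
        omega
      · subst hm
        rw [count_take_ofFn _ _ _ _ (by omega), count_take_ofFn _ _ _ _ (by omega)]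
        rw [cnt_succ, cnt_succ]
        have hU := cntU_two_mul (stepf w) m
        have hD := cntD_two_mul (stepf w) m
        rw [As_stepf, Bs_stepf] at hU hD
        have hs := strictAB w m (by omega)
        rw [Aw_succ] at hs
        rcases (stepf w (2 * m)).dichotomy with h | h
        · rw [h, if_pos rfl] at hs
          rw [h, if_neg (by simp), if_pos rfl]
          omega
        · rw [h, if_neg (by simp)] at hs
          rw [h, if_pos rfl, if_neg (by simp)]
          omega

lemma semilength_toWord (w : Perm (Fin n)) : (toWord w).semilength = n := by
  show List.count U (toWord w).toList = n
  show List.count U (List.ofFn (fun i : Fin (2 * n) => stepf w i)) = n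
  rw [count_ofFn]
  have hU := cntU_two_mul (stepf w) n
  have hD := cntD_two_mul (stepf w) n
  rw [As_stepf, Bs_stepf] at hU hD
  have hb := balance w
  have ht := cnt_add (stepf w) (2 * n)
  have hAle : Aw w n ≤ n := by
    rw [← As_stepf]; exact As_le _ _
  omega

end Perm321
end Av321

namespace Av321
namespace Perm321

open Equiv Finset List DyckStep
open _root_.Perm321

variable {n : ℕ}

lemma fex_iff (w : Perm (Fin n)) (v : Fin n) :
    ExcAt w (w.symm v) ↔ ((w.symm v : Fin n) : ℕ) ≤ (v : ℕ) := by
  unfold ExcAt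
  rw [Equiv.apply_symm_apply]

lemma rank_inj (S : Finset (Fin n)) {v v' : Fin n} (hv : v ∈ S) (hv' : v' ∈ S)
    (h : (S.filter (· ≤ v)).card = (S.filter (· ≤ v')).card) : v = v' := by
  rcases lt_trichotomy v v' with hlt | heq | hlt
  · exfalso
    have hss : S.filter (· ≤ v) ⊂ S.filter (· ≤ v') := by
      constructor
      · intro x hx
        obtain ⟨h1, h2⟩ := Finset.mem_filter.mp hx
        exact Finset.mem_filter.mpr ⟨h1, le_trans h2 (le_of_lt hlt)⟩
      · intro hsub
        have := Finset.mem_filter.mp (hsub (Finset.mem_filter.mpr ⟨hv', le_refl _⟩))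
        exact absurd (lt_of_le_of_lt this.2 hlt) (lt_irrefl _)
    exact absurd h (ne_of_lt (Finset.card_lt_card hss))
  · exact heq
  · exfalso
    have hss : S.filter (· ≤ v') ⊂ S.filter (· ≤ v) := by
      constructor
      · intro x hx
        obtain ⟨h1, h2⟩ := Finset.mem_filter.mp hx
        exact Finset.mem_filter.mpr ⟨h1, le_trans h2 (le_of_lt hlt)⟩
      · intro hsub
        have := Finset.mem_filter.mp (hsub (Finset.mem_filter.mpr ⟨hv, le_refl _⟩))
        exact absurd (lt_of_le_of_lt this.2 hlt) (lt_irrefl _)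
    exact absurd h.symm (ne_of_lt (Finset.card_lt_card hss))

lemma rank_exc {w : Perm (Fin n)} (hw : ¬Contains321 w) {i : Fin n} (hi : ExcAt w i) :
    (((Finset.univ.filter (fun x => ExcAt w x)) : Finset (Fin n)).filter (· ≤ i)).card =
    ((Finset.univ.filter (fun v : Fin n => ExcAt w (w.symm v))).filter (· ≤ w i)).card := by
  rw [show (Finset.univ.filter (fun v : Fin n => ExcAt w (w.symm v))).filter (· ≤ w i)
      = ((Finset.univ.filter (fun x => ExcAt w x)).filter (· ≤ i)).image w by
    ext v
    simp only [Finset.mem_image, Finset.mem_filter, Finset.mem_univ, true_and]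
    constructor
    · rintro ⟨hfex, hle⟩
      refine ⟨w.symm v, ⟨hfex, ?_⟩, w.apply_symm_apply v⟩
      by_contra hgt
      have := not321_mono_exc hw (not_le.mp hgt) hi hfex
      rw [w.apply_symm_apply] at this
      exact absurd (lt_of_le_of_lt hle this) (lt_irrefl _)
    · rintro ⟨x, ⟨hx, hxi⟩, rfl⟩
      refine ⟨by rw [w.symm_apply_apply]; exact hx, ?_⟩
      rcases eq_or_lt_of_le hxi with rfl | hlt
      · exact le_refl _
      · exact le_of_lt (not321_mono_exc hw hlt hx hi)]
  exact (Finset.card_image_of_injective _ w.injective).symm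

lemma rank_def {w : Perm (Fin n)} (hw : ¬Contains321 w) {i : Fin n} (hi : ¬ExcAt w i) :
    (((Finset.univ.filter (fun x => ¬ExcAt w x)) : Finset (Fin n)).filter (· ≤ i)).card =
    ((Finset.univ.filter (fun v : Fin n => ¬ExcAt w (w.symm v))).filter (· ≤ w i)).card := by
  rw [show (Finset.univ.filter (fun v : Fin n => ¬ExcAt w (w.symm v))).filter (· ≤ w i)
      = ((Finset.univ.filter (fun x => ¬ExcAt w x)).filter (· ≤ i)).image w by
    ext v
    simp only [Finset.mem_image, Finset.mem_filter, Finset.mem_univ, true_and]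
    constructor
    · rintro ⟨hfex, hle⟩
      refine ⟨w.symm v, ⟨hfex, ?_⟩, w.apply_symm_apply v⟩
      by_contra hgt
      have := not321_mono_def hw (not_le.mp hgt) hi hfex
      rw [w.apply_symm_apply] at this
      exact absurd (lt_of_le_of_lt hle this) (lt_irrefl _)
    · rintro ⟨x, ⟨hx, hxi⟩, rfl⟩
      refine ⟨by rw [w.symm_apply_apply]; exact hx, ?_⟩
      rcases eq_or_lt_of_le hxi with rfl | hlt
      · exact le_refl _
      · exact le_of_lt (not321_mono_def hw hlt hx hi)]
  exact (Finset.card_image_of_injective _ w.injective).symm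

theorem eq_of_eb_fb {w w' : Perm (Fin n)} (hw : ¬Contains321 w) (hw' : ¬Contains321 w')
    (heb : ∀ j, ebB w j = ebB w' j) (hfb : ∀ j, fbB w j = fbB w' j) : w = w' := by
  have hExc : ∀ x : Fin n, ExcAt w x ↔ ExcAt w' x := by
    intro x
    have := heb (x : ℕ)
    rw [Bool.eq_iff_iff, ebB_iff x.isLt, ebB_iff x.isLt] at this
    simpa [Fin.eta, ExcAt] using this
  have hFex : ∀ v : Fin n, ExcAt w (w.symm v) ↔ ExcAt w' (w'.symm v) := by
    intro v
    have := hfb (v : ℕ)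
    rw [Bool.eq_iff_iff, fbB_iff v.isLt, fbB_iff v.isLt] at this
    rw [fex_iff, fex_iff]
    simpa [Fin.eta] using this
  have hESet : (Finset.univ.filter (fun x : Fin n => ExcAt w x))
      = Finset.univ.filter (fun x => ExcAt w' x) :=
    Finset.filter_congr (fun x _ => by rw [hExc x])
  have hFSet : (Finset.univ.filter (fun v : Fin n => ExcAt w (w.symm v)))
      = Finset.univ.filter (fun v => ExcAt w' (w'.symm v)) :=
    Finset.filter_congr (fun v _ => by rw [hFex v])
  have hDSet : (Finset.univ.filter (fun x : Fin n => ¬ExcAt w x))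
      = Finset.univ.filter (fun x => ¬ExcAt w' x) :=
    Finset.filter_congr (fun x _ => by rw [hExc x])
  have hGSet : (Finset.univ.filter (fun v : Fin n => ¬ExcAt w (w.symm v)))
      = Finset.univ.filter (fun v => ¬ExcAt w' (w'.symm v)) :=
    Finset.filter_congr (fun v _ => by rw [hFex v])
  apply Equiv.ext
  intro i
  by_cases hi : ExcAt w i
  · have hi' : ExcAt w' i := (hExc i).mp hi
    have h1 := rank_exc hw hi
    have h2 := rank_exc hw' hi'
    rw [← hESet, ← hFSet] at h2
    apply rank_inj (Finset.univ.filter (fun v : Fin n => ExcAt w (w.symm v)))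
    · exact Finset.mem_filter.mpr ⟨Finset.mem_univ _, by rw [w.symm_apply_apply]; exact hi⟩
    · rw [hFSet]
      exact Finset.mem_filter.mpr ⟨Finset.mem_univ _, by rw [w'.symm_apply_apply]; exact hi'⟩
    · rw [← h1, ← h2]
  · have hi' : ¬ExcAt w' i := fun h => hi ((hExc i).mpr h)
    have h1 := rank_def hw hi
    have h2 := rank_def hw' hi'
    rw [← hDSet, ← hGSet] at h2
    apply rank_inj (Finset.univ.filter (fun v : Fin n => ¬ExcAt w (w.symm v)))
    · exact Finset.mem_filter.mpr ⟨Finset.mem_univ _, by rw [w.symm_apply_apply]; exact hi⟩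
    · rw [hGSet]
      exact Finset.mem_filter.mpr ⟨Finset.mem_univ _, by rw [w'.symm_apply_apply]; exact hi'⟩
    · rw [← h1, ← h2]

theorem toWord_injective {w w' : Perm (Fin n)} (hw : ¬Contains321 w) (hw' : ¬Contains321 w')
    (h : toWord w = toWord w') : w = w' := by
  have hlist : (List.ofFn (fun i : Fin (2 * n) => stepf w i))
      = List.ofFn (fun i : Fin (2 * n) => stepf w' i) := congrArg DyckWord.toList h
  rw [List.ofFn_inj] at hlist
  have hstep : ∀ i : ℕ, i < 2 * n → stepf w i = stepf w' i := by
    intro i hilt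
    exact congrFun hlist ⟨i, hilt⟩
  apply eq_of_eb_fb hw hw'
  · intro j
    by_cases hj : j < n
    · have := hstep (2 * j) (by omega)
      rw [stepf_even, stepf_even] at this
      cases h1 : ebB w j <;> cases h2 : ebB w' j <;> rw [h1, h2] at this <;> simp at this ⊢
    · unfold ebB
      rw [dif_neg hj, dif_neg hj]
  · intro j
    by_cases hj : j < n
    · have := hstep (2 * j + 1) (by omega)
      rw [stepf_odd, stepf_odd] at this
      cases h1 : fbB w j <;> cases h2 : fbB w' j <;> rw [h1, h2] at this <;> simp at this ⊢
    · unfold fbB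
      rw [dif_neg hj, dif_neg hj]

end Perm321
end Av321

namespace Av321
namespace Perm321

open Equiv Finset List DyckStep
open _root_.Perm321

variable {n : ℕ}

lemma card_univ_val_lt (m : ℕ) (hm : m ≤ n) :
    ((Finset.univ : Finset (Fin n)).filter (fun x : Fin n => (x : ℕ) < m)).card = m := by
  rw [← card_filter_range_eq n (fun j => j < m)]
  rw [show (Finset.range n).filter (fun j => j < m) = Finset.range m by
    ext a; simp only [Finset.mem_filter, Finset.mem_range]; omega]
  exact Finset.card_range m

lemma part_card (S : Finset (Fin n)) (m : ℕ) (hm : m ≤ n) :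
    (S.filter (fun x : Fin n => (x : ℕ) < m)).card + (Sᶜ.filter (fun x : Fin n => (x : ℕ) < m)).card = m := by
  classical
  have h1 : S.filter (fun x : Fin n => (x : ℕ) < m)
      = ((Finset.univ : Finset (Fin n)).filter (fun x : Fin n => (x : ℕ) < m)).filter (· ∈ S) := by
    ext x
    simp only [Finset.mem_filter, Finset.mem_univ, true_and]
    tauto
  have h2 : Sᶜ.filter (fun x : Fin n => (x : ℕ) < m)
      = ((Finset.univ : Finset (Fin n)).filter (fun x : Fin n => (x : ℕ) < m)).filter (fun x => x ∉ S) := by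
    ext x
    simp only [Finset.mem_filter, Finset.mem_univ, true_and, Finset.mem_compl]
    tauto
  rw [h1, h2, Finset.card_filter_add_card_filter_not, card_univ_val_lt m hm]

lemma As_card (s : ℕ → DyckStep) (m : ℕ) (hm : m ≤ n) :
    As s m = (((Finset.univ : Finset (Fin n)).filter (fun i : Fin n => s (2 * (i : ℕ)) = U)).filter
      (fun x : Fin n => (x : ℕ) < m)).card := by
  unfold As
  rw [show (Finset.range m).filter (fun j => s (2 * j) = U)
      = (Finset.range n).filter (fun j => j < m ∧ s (2 * j) = U) by
    ext a
    simp only [Finset.mem_filter, Finset.mem_range]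
    constructor
    · rintro ⟨h1, h2⟩; exact ⟨by omega, h1, h2⟩
    · rintro ⟨h1, h2, h3⟩; exact ⟨h2, h3⟩]
  rw [card_filter_range_eq n _]
  congr 1
  ext x
  simp only [Finset.mem_filter, Finset.mem_univ, true_and]
  tauto

lemma Bs_card (s : ℕ → DyckStep) (m : ℕ) (hm : m ≤ n) :
    Bs s m = (((Finset.univ : Finset (Fin n)).filter (fun v : Fin n => s (2 * (v : ℕ) + 1) = D)).filter
      (fun x : Fin n => (x : ℕ) < m)).card := by
  unfold Bs
  rw [show (Finset.range m).filter (fun j => s (2 * j + 1) = D)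
      = (Finset.range n).filter (fun j => j < m ∧ s (2 * j + 1) = D) by
    ext a
    simp only [Finset.mem_filter, Finset.mem_range]
    constructor
    · rintro ⟨h1, h2⟩; exact ⟨by omega, h1, h2⟩
    · rintro ⟨h1, h2, h3⟩; exact ⟨h2, h3⟩]
  rw [card_filter_range_eq n _]
  congr 1
  ext x
  simp only [Finset.mem_filter, Finset.mem_univ, true_and]
  tauto

lemma card_filter_lt_nth (S : Finset (Fin n)) {K : ℕ} (hS : S.card = K) (t : Fin K) :
    (S.filter (· < (S.orderIsoOfFin hS t : Fin n))).card = (t : ℕ) := by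
  classical
  rw [show S.filter (· < (S.orderIsoOfFin hS t : Fin n))
      = (Finset.Iio t).image (fun u => (S.orderIsoOfFin hS u : Fin n)) by
    ext x
    simp only [Finset.mem_filter, Finset.mem_image, Finset.mem_Iio]
    constructor
    · rintro ⟨hxS, hxlt⟩
      refine ⟨(S.orderIsoOfFin hS).symm ⟨x, hxS⟩, ?_, by simp⟩
      rw [← OrderIso.lt_iff_lt (S.orderIsoOfFin hS), OrderIso.apply_symm_apply]
      exact Subtype.coe_lt_coe.mp hxlt
    · rintro ⟨u, hu, rfl⟩
      refine ⟨(S.orderIsoOfFin hS u).2, ?_⟩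
      exact Subtype.coe_lt_coe.mpr ((S.orderIsoOfFin hS).lt_iff_lt.mpr hu)]
  rw [Finset.card_image_of_injective _
    (fun a b hab => (S.orderIsoOfFin hS).injective (Subtype.coe_injective hab)), Fin.card_Iio]

end Perm321
end Av321

namespace Av321
namespace Perm321

open Equiv Finset List DyckStep
open _root_.Perm321

variable {n : ℕ}

theorem surj_exists (s : ℕ → DyckStep)
    (hbal : As s n = Bs s n)
    (hweak : ∀ m, m ≤ n → Bs s m ≤ As s m)
    (hstrict : ∀ m, m < n → Bs s m < As s m + (if s (2 * m) = U then 1 else 0)) :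
    ∃ w : Perm (Fin n), (¬Contains321 w) ∧ ∀ j, j < 2 * n → stepf w j = s j := by
  classical
  set E : Finset (Fin n) := Finset.univ.filter (fun i : Fin n => s (2 * (i : ℕ)) = U) with hE
  set F : Finset (Fin n) := Finset.univ.filter (fun v : Fin n => s (2 * (v : ℕ) + 1) = D) with hF
  have hEmem : ∀ x : Fin n, x ∈ E ↔ s (2 * (x : ℕ)) = U := fun x => by
    rw [hE, Finset.mem_filter]; simp
  have hFmem : ∀ x : Fin n, x ∈ F ↔ s (2 * (x : ℕ) + 1) = D := fun x => by
    rw [hF, Finset.mem_filter]; simp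
  have hEA : E.card = As s n := by
    rw [As_card s n le_rfl, ← hE, Finset.filter_true_of_mem (fun x _ => x.isLt)]
  have hFB : F.card = Bs s n := by
    rw [Bs_card s n le_rfl, ← hF, Finset.filter_true_of_mem (fun x _ => x.isLt)]
  have hEF : F.card = E.card := by rw [hEA, hFB, hbal]
  have hEc : (Eᶜ).card = n - E.card := by rw [Finset.card_compl, Fintype.card_fin]
  have hFc : (Fᶜ).card = n - E.card := by rw [Finset.card_compl, Fintype.card_fin, hEF]
  set eE := E.orderIsoOfFin rfl with heE
  set eF := F.orderIsoOfFin hEF with heF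
  set eEc := (Eᶜ).orderIsoOfFin hEc with heEc
  set eFc := (Fᶜ).orderIsoOfFin hFc with heFc
  set eqE : {a : Fin n // a ∈ E} ≃ {a : Fin n // a ∈ F} :=
    eE.toEquiv.symm.trans eF.toEquiv with heqE
  set eqC : {a : Fin n // ¬ a ∈ E} ≃ {a : Fin n // ¬ a ∈ F} :=
    (Equiv.subtypeEquivRight (fun x => (Finset.mem_compl (s := E) (a := x)).symm)).trans
      (eEc.toEquiv.symm.trans (eFc.toEquiv.trans
        (Equiv.subtypeEquivRight (fun x => Finset.mem_compl (s := F) (a := x))))) with heqC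
  set wp : Perm (Fin n) := (Equiv.sumCompl (fun a : Fin n => a ∈ E)).symm.trans
    ((Equiv.sumCongr eqE eqC).trans (Equiv.sumCompl (fun a : Fin n => a ∈ F))) with hwp
  have wp_mem : ∀ (i : Fin n) (hi : i ∈ E), wp i = (eF (eE.symm ⟨i, hi⟩) : Fin n) := by
    intro i hi
    show (Equiv.sumCompl _) ((Equiv.sumCongr eqE eqC) ((Equiv.sumCompl _).symm i)) = _
    rw [Equiv.sumCompl_symm_apply_of_pos hi]
    rfl
  have wp_nmem : ∀ (i : Fin n) (hi : i ∉ E),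
      wp i = (eFc (eEc.symm ⟨i, Finset.mem_compl.mpr hi⟩) : Fin n) := by
    intro i hi
    show (Equiv.sumCompl _) ((Equiv.sumCongr eqE eqC) ((Equiv.sumCompl _).symm i)) = _
    rw [Equiv.sumCompl_symm_apply_of_neg hi]
    rfl
  -- key order fact on E/F
  have hEF_le : ∀ t : Fin E.card, ((eE t : Fin n) : ℕ) ≤ ((eF t : Fin n) : ℕ) := by
    intro t
    by_contra hlt
    push_neg at hlt
    set m := ((eE t : Fin n) : ℕ) with hm
    have hmn : m < n := (eE t : Fin n).isLt
    have hAs : As s m = (t : ℕ) := by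
      rw [As_card s m (le_of_lt hmn), ← hE,
        Finset.filter_congr (fun x (_ : x ∈ E) => (Fin.lt_def (a := x) (b := (eE t : Fin n))).symm),
        card_filter_lt_nth E rfl t]
    have hsub : (Finset.Iic t).image (fun u => ((eF u : Fin n)))
        ⊆ F.filter (fun x : Fin n => (x : ℕ) < m) := by
      intro x hx
      obtain ⟨u, hu, rfl⟩ := Finset.mem_image.mp hx
      rw [Finset.mem_Iic] at hu
      refine Finset.mem_filter.mpr ⟨(eF u).2, ?_⟩
      have h1 : (eF u : Fin n) ≤ (eF t : Fin n) := Subtype.coe_le_coe.mpr (eF.le_iff_le.mpr hu)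
      have := Fin.le_def.mp h1
      omega
    have hcard : (t : ℕ) + 1 ≤ (F.filter (fun x : Fin n => (x : ℕ) < m)).card := by
      have h1 := Finset.card_le_card hsub
      rw [Finset.card_image_of_injective _
        (fun a b hab => eF.injective (Subtype.coe_injective hab)), Fin.card_Iic] at h1
      exact h1
    have hBs : Bs s m = (F.filter (fun x : Fin n => (x : ℕ) < m)).card := by
      rw [Bs_card s m (le_of_lt hmn), ← hF]
    have := hweak m (le_of_lt hmn)
    omega
  -- key order fact on complements
  have hFcEc : ∀ t : Fin (n - E.card), ((eFc t : Fin n) : ℕ) < ((eEc t : Fin n) : ℕ) := by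
    intro t
    by_contra hge
    push_neg at hge
    set m := ((eEc t : Fin n) : ℕ) with hm
    have hmn : m < n := (eEc t : Fin n).isLt
    have hsE : ¬ s (2 * m) = U := by
      have h2 : (eEc t : Fin n) ∉ E := Finset.mem_compl.mp (eEc t).2
      intro hcontra
      exact h2 ((hEmem _).mpr hcontra)
    have hst := hstrict m hmn
    rw [if_neg hsE] at hst
    have hEcCard : ((Eᶜ).filter (fun x : Fin n => (x : ℕ) < m)).card = (t : ℕ) := by
      rw [Finset.filter_congr
        (fun x (_ : x ∈ Eᶜ) => (Fin.lt_def (a := x) (b := (eEc t : Fin n))).symm),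
        card_filter_lt_nth (Eᶜ) hEc t]
    have hFcCard : ((Fᶜ).filter (fun x : Fin n => (x : ℕ) < m)).card ≤ (t : ℕ) := by
      have hsub : (Fᶜ).filter (fun x : Fin n => (x : ℕ) < m)
          ⊆ (Finset.Iio t).image (fun u => ((eFc u : Fin n))) := by
        intro x hx
        obtain ⟨hxF, hxm⟩ := Finset.mem_filter.mp hx
        set u := eFc.symm ⟨x, hxF⟩ with hu
        have hxu : (eFc u : Fin n) = x := by rw [hu, OrderIso.apply_symm_apply]
        refine Finset.mem_image.mpr ⟨u, ?_, hxu⟩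
        rw [Finset.mem_Iio]
        rw [← eFc.lt_iff_lt]
        apply Subtype.coe_lt_coe.mp
        rw [hxu]
        show (x : Fin n) < (eFc t : Fin n)
        rw [Fin.lt_def]
        omega
      have h1 := Finset.card_le_card hsub
      calc ((Fᶜ).filter (fun x : Fin n => (x : ℕ) < m)).card
          ≤ ((Finset.Iio t).image (fun u => ((eFc u : Fin n)))).card := h1
        _ = (t : ℕ) := by
            rw [Finset.card_image_of_injective _
              (fun a b hab => eFc.injective (Subtype.coe_injective hab)), Fin.card_Iio]
    have hpartE := part_card E m (le_of_lt hmn)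
    have hpartF := part_card F m (le_of_lt hmn)
    have hAs : As s m = (E.filter (fun x : Fin n => (x : ℕ) < m)).card := by
      rw [As_card s m (le_of_lt hmn), ← hE]
    have hBs : Bs s m = (F.filter (fun x : Fin n => (x : ℕ) < m)).card := by
      rw [Bs_card s m (le_of_lt hmn), ← hF]
    omega
  -- pointwise facts
  have hexc1 : ∀ (i : Fin n), i ∈ E → (i : ℕ) ≤ (wp i : ℕ) := by
    intro i hi
    rw [wp_mem i hi]
    have h1 := hEF_le (eE.symm ⟨i, hi⟩)
    have hcoe : (eE (eE.symm ⟨i, hi⟩) : Fin n) = i := by rw [OrderIso.apply_symm_apply]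
    rw [hcoe] at h1
    exact h1
  have hexc2 : ∀ (i : Fin n), i ∉ E → (wp i : ℕ) < (i : ℕ) := by
    intro i hi
    rw [wp_nmem i hi]
    have h1 := hFcEc (eEc.symm ⟨i, Finset.mem_compl.mpr hi⟩)
    have hcoe : (eEc (eEc.symm ⟨i, Finset.mem_compl.mpr hi⟩) : Fin n) = i := by
      rw [OrderIso.apply_symm_apply]
    rw [hcoe] at h1
    exact h1
  have hexcIff : ∀ i : Fin n, ExcAt wp i ↔ i ∈ E := by
    intro i
    constructor
    · intro h
      by_contra hi
      exact absurd (show (i : ℕ) ≤ (wp i : ℕ) from h) (not_le.mpr (hexc2 i hi))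
    · intro h
      exact hexc1 i h
  have hmemF1 : ∀ (i : Fin n), i ∈ E → wp i ∈ F := by
    intro i hi; rw [wp_mem i hi]; exact (eF _).2
  have hmemF2 : ∀ (i : Fin n), i ∉ E → wp i ∉ F := by
    intro i hi; rw [wp_nmem i hi]; exact Finset.mem_compl.mp (eFc _).2
  have hmono1 : ∀ i j : Fin n, i < j → ExcAt wp i → ExcAt wp j → wp i < wp j := by
    intro i j hij hi hj
    have hiE := (hexcIff i).mp hi
    have hjE := (hexcIff j).mp hj
    rw [wp_mem i hiE, wp_mem j hjE]
    exact Subtype.coe_lt_coe.mpr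
      (eF.lt_iff_lt.mpr (eE.symm.lt_iff_lt.mpr (Subtype.mk_lt_mk.mpr hij)))
  have hmono2 : ∀ i j : Fin n, i < j → ¬ExcAt wp i → ¬ExcAt wp j → wp i < wp j := by
    intro i j hij hi hj
    have hiE : i ∉ E := fun h => hi ((hexcIff i).mpr h)
    have hjE : j ∉ E := fun h => hj ((hexcIff j).mpr h)
    rw [wp_nmem i hiE, wp_nmem j hjE]
    exact Subtype.coe_lt_coe.mpr
      (eFc.lt_iff_lt.mpr (eEc.symm.lt_iff_lt.mpr (Subtype.mk_lt_mk.mpr hij)))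
  have havoid : ¬Contains321 wp := mono_not321 hmono1 hmono2
  refine ⟨wp, havoid, ?_⟩
  have heb : ∀ j, j < n → (ebB wp j = true ↔ s (2 * j) = U) := by
    intro j hj
    rw [ebB_iff hj, ← hEmem ⟨j, hj⟩]
    constructor
    · intro h
      by_contra hc
      have := hexc2 _ hc
      simp only [Fin.val_mk] at this h
      omega
    · intro h
      exact hexc1 _ h
  have hfb : ∀ j, j < n → (fbB wp j = true ↔ s (2 * j + 1) = D) := by
    intro j hj
    rw [fbB_iff hj, ← hFmem ⟨j, hj⟩]
    set i := wp.symm ⟨j, hj⟩ with hi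
    have hwi : wp i = ⟨j, hj⟩ := by rw [hi]; exact wp.apply_symm_apply _
    constructor
    · intro h
      by_contra hc
      have hiE : i ∉ E := fun hmem => hc (hwi ▸ hmemF1 i hmem)
      have h2 := hexc2 i hiE
      rw [hwi] at h2
      simp only [Fin.val_mk] at h2
      omega
    · intro h
      have hiE : i ∈ E := by
        by_contra hc
        exact (hmemF2 i hc) (hwi ▸ h)
      have h2 := hexc1 i hiE
      rw [hwi] at h2
      exact h2
  intro jj hjj
  rcases Nat.even_or_odd jj with ⟨a, ha⟩ | ⟨a, ha⟩
  · have hj : jj = 2 * a := by omega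
    subst hj
    have han : a < n := by omega
    rw [stepf_even]
    rcases (s (2 * a)).dichotomy with hsa | hsa
    · rw [if_pos ((heb a han).mpr hsa), hsa]
    · have hc : ¬ ebB wp a = true := fun hc => by
        have h2 := (heb a han).mp hc
        rw [hsa] at h2
        exact absurd h2 (by simp)
      rw [if_neg hc, hsa]
  · have hj : jj = 2 * a + 1 := by omega
    subst hj
    have han : a < n := by omega
    rw [stepf_odd]
    rcases (s (2 * a + 1)).dichotomy with hsa | hsa
    · have hc : ¬ fbB wp a = true := fun hc => by
        have h2 := (hfb a han).mp hc
        rw [hsa] at h2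
        exact absurd h2 (by simp)
      rw [if_neg hc, hsa]
    · rw [if_pos ((hfb a han).mpr hsa), hsa]

end Perm321
end Av321

namespace Av321
namespace Perm321

open Equiv Finset List DyckStep
open _root_.Perm321

variable {n : ℕ}

theorem exists_perm_of_dyckWord (p : DyckWord) (hp : p.semilength = n) :
    ∃ w : Perm (Fin n), ¬Contains321 w ∧ toWord w = p := by
  classical
  set s : ℕ → DyckStep := fun i => p.toList.getD i U with hs
  have hlen : p.toList.length = 2 * n := by
    rw [← DyckWord.two_mul_semilength_eq_length, hp]
  have hofn : p.toList = List.ofFn (fun i : Fin (2 * n) => s i) := by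
    apply List.ext_getElem
    · rw [hlen, List.length_ofFn]
    · intro i h1 h2
      rw [List.getElem_ofFn]
      exact (List.getD_eq_getElem p.toList U h1).symm
  have hcnt : ∀ (c : DyckStep) (i : ℕ), (p.toList.take i).count c = cnt s c (min i (2 * n)) := by
    intro c i
    rcases le_or_gt i (2 * n) with h | h
    · rw [min_eq_left h, hofn]
      exact count_take_ofFn _ _ _ _ h
    · rw [min_eq_right (le_of_lt h), List.take_of_length_le (by omega), hofn]
      exact count_ofFn _ _ _
  have hbal2 : cnt s U (2 * n) = cnt s D (2 * n) := by
    have h := p.count_U_eq_count_D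
    rw [hofn, count_ofFn, count_ofFn] at h
    exact h
  have hpre : ∀ i, i ≤ 2 * n → cnt s D i ≤ cnt s U i := by
    intro i hi
    have h := p.count_D_le_count_U i
    rw [hcnt U i, hcnt D i, min_eq_left hi] at h
    exact h
  have hAsBs_bal : As s n = Bs s n := by
    have hU := cntU_two_mul s n
    have hD := cntD_two_mul s n
    omega
  have hweak : ∀ m, m ≤ n → Bs s m ≤ As s m := by
    intro m hm
    have h1 := cntU_two_mul s m
    have h2 := cntD_two_mul s m
    have h3 := hpre (2 * m) (by omega)
    omega
  have hstrict : ∀ m, m < n → Bs s m < As s m + (if s (2 * m) = U then 1 else 0) := by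
    intro m hm
    have h1 := cntU_two_mul s m
    have h2 := cntD_two_mul s m
    have h3 := hpre (2 * m + 1) (by omega)
    rw [cnt_succ, cnt_succ] at h3
    rcases (s (2 * m)).dichotomy with h | h
    · rw [h, if_neg (by simp), if_pos rfl] at h3
      rw [h, if_pos rfl]
      omega
    · rw [h, if_pos rfl, if_neg (by simp)] at h3
      rw [h, if_neg (by simp)]
      omega
  obtain ⟨w, hw, hstep⟩ := surj_exists s hAsBs_bal hweak hstrict
  refine ⟨w, hw, ?_⟩
  apply DyckWord.ext
  show List.ofFn (fun i : Fin (2 * n) => stepf w i) = p.toList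
  rw [hofn]
  congr 1
  funext i
  exact hstep i i.isLt

theorem card_avoid321 (n : ℕ) :
    Nat.card {w : Perm (Fin n) // ¬Contains321 w} = catalan n := by
  rw [← DyckWord.card_dyckWord_semilength_eq_catalan n, ← Nat.card_eq_fintype_card]
  apply Nat.card_eq_of_bijective
    (fun w : {w : Perm (Fin n) // ¬Contains321 w} =>
      (⟨toWord w.1, semilength_toWord w.1⟩ : {p : DyckWord // p.semilength = n}))
  constructor
  · intro w w' h
    exact Subtype.ext (toWord_injective w.2 w'.2 (congrArg Subtype.val h))
  · rintro ⟨p, hp⟩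
    obtain ⟨w, hw, hwp⟩ := exists_perm_of_dyckWord p hp
    exact ⟨⟨w, hw⟩, Subtype.ext hwp⟩

end Perm321
end Av321

namespace Av321
namespace Perm321

open Equiv Finset List DyckStep
open _root_.Perm321

/-- Extension of a permutation of `Fin m` to `Fin (m+1)` fixing `0`. -/
def extPerm (m : ℕ) (w : Perm (Fin m)) : Perm (Fin (m + 1)) :=
  (Equiv.permCongr (finSuccEquiv m).symm) w.optionCongr

lemma extPerm_zero (m : ℕ) (w : Perm (Fin m)) : extPerm m w 0 = 0 := by
  unfold extPerm
  rw [Equiv.permCongr_apply]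
  simp

lemma extPerm_succ (m : ℕ) (w : Perm (Fin m)) (i : Fin m) :
    extPerm m w i.succ = (w i).succ := by
  unfold extPerm
  rw [Equiv.permCongr_apply]
  simp

lemma extPerm_contains (m : ℕ) (w : Perm (Fin m)) :
    Contains321 (extPerm m w) ↔ Contains321 w := by
  constructor
  · rintro ⟨i, j, k, hij, hjk, h1, h2⟩
    have hi0 : i ≠ 0 := by
      rintro rfl
      rw [extPerm_zero] at h2
      exact Fin.not_lt_zero _ h2
    have hj0 : j ≠ 0 := by
      rintro rfl
      exact Fin.not_lt_zero _ hij
    have hk0 : k ≠ 0 := by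
      rintro rfl
      exact Fin.not_lt_zero _ hjk
    obtain ⟨i', rfl⟩ := Fin.eq_succ_of_ne_zero hi0
    obtain ⟨j', rfl⟩ := Fin.eq_succ_of_ne_zero hj0
    obtain ⟨k', rfl⟩ := Fin.eq_succ_of_ne_zero hk0
    rw [extPerm_succ, extPerm_succ] at h1 h2
    refine ⟨i', j', k', ?_, ?_, ?_, ?_⟩
    · exact Fin.succ_lt_succ_iff.mp hij
    · exact Fin.succ_lt_succ_iff.mp hjk
    · exact Fin.succ_lt_succ_iff.mp h1
    · exact Fin.succ_lt_succ_iff.mp h2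
  · rintro ⟨i, j, k, hij, hjk, h1, h2⟩
    refine ⟨i.succ, j.succ, k.succ, Fin.succ_lt_succ_iff.mpr hij, Fin.succ_lt_succ_iff.mpr hjk,
      ?_, ?_⟩
    · rw [extPerm_succ, extPerm_succ]
      exact Fin.succ_lt_succ_iff.mpr h1
    · rw [extPerm_succ, extPerm_succ]
      exact Fin.succ_lt_succ_iff.mpr h2

lemma optionCongr_removeNone' {α : Type*} (e : Option α ≃ Option α) (he : e none = none) :
    (e.removeNone).optionCongr = e := by
  apply Equiv.ext
  intro x
  cases x with
  | none => simp [he]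
  | some a =>
    have hne : e (some a) ≠ none := by
      intro hc
      have := e.injective (hc.trans he.symm)
      simp at this
    obtain ⟨b, hb⟩ := Option.ne_none_iff_exists'.mp hne
    have := Equiv.removeNone_some e ⟨b, hb⟩
    simp only [Equiv.optionCongr_apply, Option.map_some]
    rw [this]

lemma extPerm_surj (m : ℕ) (v : Perm (Fin (m + 1))) (hv : v 0 = 0) :
    ∃ w : Perm (Fin m), extPerm m w = v := by
  set v' : Perm (Option (Fin m)) := (Equiv.permCongr (finSuccEquiv m)) v with hv'
  have hnone : v' none = none := by
    rw [hv', Equiv.permCongr_apply]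
    simp [hv]
  refine ⟨v'.removeNone, ?_⟩
  unfold extPerm
  rw [optionCongr_removeNone' v' hnone, hv']
  rw [← Equiv.permCongr_symm]
  exact Equiv.symm_apply_apply _ _

theorem card_fix0 (m : ℕ) :
    Nat.card {v : Perm (Fin (m + 1)) // ¬Contains321 v ∧ v 0 = 0} =
      Nat.card {w : Perm (Fin m) // ¬Contains321 w} := by
  symm
  apply Nat.card_eq_of_bijective
    (fun w : {w : Perm (Fin m) // ¬Contains321 w} =>
      (⟨extPerm m w.1, fun hc => w.2 ((extPerm_contains m w.1).mp hc), extPerm_zero m w.1⟩ :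
        {v : Perm (Fin (m + 1)) // ¬Contains321 v ∧ v 0 = 0}))
  constructor
  · intro w w' h
    have h2 : extPerm m w.1 = extPerm m w'.1 := congrArg Subtype.val h
    unfold extPerm at h2
    have h3 := (Equiv.permCongr (finSuccEquiv m).symm).injective h2
    apply Subtype.ext
    rw [← Equiv.removeNone_optionCongr w.1, ← Equiv.removeNone_optionCongr w'.1, h3]
  · rintro ⟨v, hv, hv0⟩
    obtain ⟨w, hw⟩ := extPerm_surj m v hv0
    refine ⟨⟨w, fun hc => hv (hw ▸ (extPerm_contains m w).mpr hc)⟩, Subtype.ext hw⟩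

end Perm321
end Av321

theorem part1 (n : ℕ) (hn : 2 ≤ n) (v : Equiv.Perm (Fin n)) :
      (¬Contains321 v ∧ ¬WkAboveSigma n 1 hn v ∧
          ¬Contains321 (sigk n 1 hn * v)) ↔
        (¬Contains321 v ∧ v ⟨0, by linarith⟩ = ⟨0, by linarith⟩) := by
  have h0 : (0:ℕ) < n := by omega
  set z : Fin n := ⟨0, by omega⟩ with hz
  set o : Fin n := ⟨1, by omega⟩ with ho
  have hzo : z ≠ o := by simp [hz, ho, Fin.ext_iff]
  have hov : (o : ℕ) = 1 := rfl
  have hzv : (z : ℕ) = 0 := rfl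
  have happ : ∀ x, (sigk n 1 (by omega) * v) x = Equiv.swap z o (v x) := fun x => rfl
  constructor
  · rintro ⟨hv, hwk, hsv⟩
    refine ⟨hv, ?_⟩
    by_contra hv0
    have hne : v⁻¹ z ≠ v⁻¹ o := fun h => hzo (by simpa using congrArg v h)
    have hlt : v⁻¹ z < v⁻¹ o :=
      lt_of_le_of_ne (not_lt.mp (by exact hwk)) hne
    have hp0 : v⁻¹ z ≠ z := fun h => hv0 (by simpa using (congrArg v h).symm)
    have hvz1 : v z ≠ o := by
      intro h
      have h2 : v⁻¹ o = z := by rw [← h]; exact v.symm_apply_apply z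
      rw [h2] at hlt
      simp [Fin.lt_def, hz] at hlt
    apply hsv
    refine ⟨z, v⁻¹ z, v⁻¹ o, ?_, hlt, ?_, ?_⟩
    · refine lt_of_le_of_ne (by simp [hz, Fin.le_def]) (Ne.symm hp0)
    · simp only [happ, Equiv.Perm.inv_def, Equiv.apply_symm_apply, Equiv.swap_apply_left,
        Equiv.swap_apply_right]
      simp [Fin.lt_def, hz, ho]
    · simp only [happ, Equiv.Perm.inv_def, Equiv.apply_symm_apply, Equiv.swap_apply_left]
      rw [Equiv.swap_apply_of_ne_of_ne hv0 hvz1, Fin.lt_def, hov]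
      have h1 : (v z : ℕ) ≠ 0 := fun h => hv0 (Fin.ext (h.trans hzv.symm))
      have h2 : (v z : ℕ) ≠ 1 := fun h => hvz1 (Fin.ext (h.trans hov.symm))
      omega
  · rintro ⟨hv, hv0⟩
    have hvinv0 : v⁻¹ z = z := by
      rw [Equiv.Perm.inv_def, Equiv.symm_apply_eq]; exact hv0.symm
    have hnez : ∀ x : Fin n, x ≠ z → v x ≠ z := by
      intro x hx h
      exact hx (by rw [← hvinv0, ← h]; simp)
    refine ⟨hv, ?_, ?_⟩
    · intro hw
      unfold WkAboveSigma at hw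
      rw [show (⟨1-1, by omega⟩ : Fin n) = z from rfl, hvinv0] at hw
      simp [Fin.lt_def, hz] at hw
    · rintro ⟨i, j, k, hij, hjk, h1, h2⟩
      simp only [happ] at h1 h2
      have hzle : ∀ x : Fin n, z ≤ x := fun x => by simp [hz, Fin.le_def]
      have hjz : j ≠ z := fun h => by
        have := lt_of_le_of_lt (hzle i) hij; rw [h] at this; exact lt_irrefl _ this
      have hkz : k ≠ z := fun h => by
        have := lt_of_le_of_lt (hzle j) hjk; rw [h] at this; exact lt_irrefl _ this
      have hlt_o : ∀ x : Fin n, x < o → x = z := by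
        intro x hx; rw [Fin.lt_def, hov] at hx; exact Fin.ext (by rw [hzv]; omega)
      have hnlt_z : ∀ x : Fin n, ¬ x < z := fun x hx => by
        rw [Fin.lt_def, hzv] at hx; omega
      by_cases hiz : i = z
      · subst hiz
        rw [hv0, Equiv.swap_apply_left] at h2
        have := hlt_o _ h2
        rw [this] at h1
        exact hnlt_z _ h1
      · by_cases hvj : v j = o
        · rw [hvj, Equiv.swap_apply_right] at h1
          exact hnlt_z _ h1
        · have hvjz : v j ≠ z := hnez j hjz
          rw [Equiv.swap_apply_of_ne_of_ne hvjz hvj] at h1 h2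
          by_cases hvk : v k = o
          · rw [hvk, Equiv.swap_apply_right] at h1
            have hvi1 : v i ≠ o := fun h =>
              absurd (v.injective (h.trans hvk.symm)) (ne_of_lt (hij.trans hjk))
            have hviz : v i ≠ z := hnez i hiz
            rw [Equiv.swap_apply_of_ne_of_ne hviz hvi1] at h2
            refine hv ⟨i, j, k, hij, hjk, ?_, h2⟩
            rw [hvk, Fin.lt_def, hov]
            have ha : (v j : ℕ) ≠ 0 := fun h => hvjz (Fin.ext (h.trans hzv.symm))
            have hb : (v j : ℕ) ≠ 1 := fun h => hvj (Fin.ext (h.trans hov.symm))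
            omega
          · have hvkz : v k ≠ z := hnez k hkz
            rw [Equiv.swap_apply_of_ne_of_ne hvkz hvk] at h1
            by_cases hvi : v i = o
            · rw [hvi, Equiv.swap_apply_right] at h2
              exact hnlt_z _ h2
            · have hviz : v i ≠ z := hnez i hiz
              rw [Equiv.swap_apply_of_ne_of_ne hviz hvi] at h2
              exact hv ⟨i, j, k, hij, hjk, h1, h2⟩


/-- The set of `321`-avoiding `v ∈ S_n` with `σ_1 ≰wk v` such that `σ_1 v` is
also `321`-avoiding is exactly the set of `321`-avoiding permutations fixing `1`
(i.e. `321`-avoiding permutations of `{2, …, n}`), and hence has cardinality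
`C_{n-1}`. -/
theorem B1_is_321_avoiding_fixing_one (n : ℕ) (hn : 2 ≤ n) :
    (∀ v : Equiv.Perm (Fin n),
      (¬Contains321 v ∧ ¬WkAboveSigma n 1 (by omega) v ∧
          ¬Contains321 (sigk n 1 (by omega) * v)) ↔
        (¬Contains321 v ∧ v ⟨0, by omega⟩ = ⟨0, by omega⟩)) ∧
    Nat.card {v : Equiv.Perm (Fin n) // ¬Contains321 v ∧
      ¬WkAboveSigma n 1 (by omega) v ∧ ¬Contains321 (sigk n 1 (by omega) * v)} =
      catalan (n - 1) := by
  refine ⟨part1 n hn, ?_⟩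
  rw [Nat.card_congr (Equiv.subtypeEquivRight (fun v => part1 n hn v))]
  obtain ⟨m, rfl⟩ : ∃ m, n = m + 1 := ⟨n - 1, by omega⟩
  have hiff : ∀ v : Equiv.Perm (Fin (m + 1)),
      (¬Contains321 v ∧ v ⟨0, by omega⟩ = ⟨0, by omega⟩) ↔ (¬Contains321 v ∧ v 0 = 0) := by
    intro v
    rw [show (⟨0, by omega⟩ : Fin (m + 1)) = 0 from Fin.ext (by simp)]
  rw [Nat.card_congr (Equiv.subtypeEquivRight hiff), Av321.Perm321.card_fix0 m,
    Av321.Perm321.card_avoid321 m, Nat.add_sub_cancel]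
end
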